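/- arXiv:2102.12464 — 8 statements merged into one kernel-verified Lean document; each statement's English description precedes it below -/
import Mathlib

section
/- For every positive integer t there exist constants α, β, γ > 0 such that the following holds: for all positive integers s and n ≥ 2, if G is a semilinear graph of complexity t on n vertices that contains no clique of size s, then the chromatic number of G satisfies χ(G) ≤ α·s^β·(log n)^γ. -/
/-- `f : ℝ^d × ℝ^d → ℝ` is linear (affine). -/
def IsLinearPair {d : ℕ} (f : (Fin d → ℝ) → (Fin d → ℝ) → ℝ) : Prop :=
  ∃ (a b : Fin d → ℝ) (c : ℝ), ∀ x y, f x y = c + (∑ i, a i * x i) + (∑ i, b i * y i)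

/-- `G` is a semilinear graph of complexity `t`. -/
def IsSemilinear {V : Type} (G : SimpleGraph V) (t : ℕ) : Prop :=
  ∃ d : ℕ, 0 < d ∧
    ∃ v : V → Fin d → ℝ, Function.Injective v ∧
      ∃ f : Fin t → (Fin d → ℝ) → (Fin d → ℝ) → ℝ,
        (∀ i, IsLinearPair (f i)) ∧
        ∃ φ : (Fin t → Prop × Prop × Prop) → Prop,
          ∀ x y : V, x ≠ y →
            (G.Adj x y ↔
              φ (fun i => (f i (v x) (v y) < 0, f i (v x) (v y) ≤ 0, f i (v x) (v y) = 0)))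


/-!
Write each linear form as `f i (x, y) = U i x - W i y`. Adjacency of `x ≠ y` then depends only
on the pattern `(compare (U i x) (W i y))ᵢ ∈ {<, =, >}ᵗ`, and the product of colourings of the
`3ᵗ` pattern graphs colours `G`. A pattern graph joins `x ≠ y` when `R x y ∨ R y x`, where `R`
is a conjunction of `k` comparisons `U i x ⋈ W i y` and of strict orders `ν j x < ν j y`; we
induct on `k`. For `k = 0`, `R` is a strict partial order and colouring by height needs at most
`s` colours. For the first comparison, replace the values by ranks `a x, b x < 2 ^ (Λ + 1)` and
split the vertices by `compare (a x) (b x)` and by the highest binary digit in which `a x` and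
`b x` differ. Inside one class, the comparison either holds or fails automatically, or it is
equivalent to comparing the indices of the dyadic intervals containing `a x` and `b x`: a new
order constraint. So each of the `3 (Λ + 1)` classes needs at most `B²` colours when `B` colours
suffice for `k - 1` comparisons, and `k` comparisons need at most `(3 (Λ + 1) s) ^ 2 ^ k` colours.
-/

namespace SimpleGraph

variable {V ι : Type*} {G : SimpleGraph V} {n : ℕ}

theorem fromRel_or (r r' : V → V → Prop) :
    fromRel (fun x y => r x y ∨ r' x y) = fromRel r ⊔ fromRel r' := by
  ext x y
  simp only [fromRel_adj, sup_adj]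
  tauto

theorem induce_fromRel (r : V → V → Prop) (S : Set V) :
    (fromRel r).induce S = fromRel fun x y : S => r x y := by
  ext x y
  simp [fromRel_adj, Subtype.ext_iff]

theorem CliqueFree.not_pairwise_adj (hG : G.CliqueFree n) (f : Fin n → V) :
    ¬Pairwise fun i j => G.Adj (f i) (f j) := fun hf =>
  (not_cliqueFree_iff_top_isContained n).2
    ⟨Hom.toCopy ⟨f, fun h => hf h⟩ fun _ _ hij => by_contra fun h => (hf h).ne hij⟩ hG

theorem CliqueFree.induce (hG : G.CliqueFree n) (S : Set V) : (G.induce S).CliqueFree n :=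
  hG.comap ⟨Copy.induce G S⟩

theorem exists_coloring_of_induce_fibers (κ : V → ι)
    (h : ∀ c, (G.induce {x | κ x = c}).Colorable n) :
    ∃ C : V → Fin n, ∀ x y, G.Adj x y → κ x = κ y → C x ≠ C y := by
  let C := fun c => (h c).some
  have hfib : ∀ c x (hx : κ x = c), C c ⟨x, hx⟩ = C (κ x) ⟨x, rfl⟩ := by
    rintro _ x rfl
    rfl
  refine ⟨fun x => C (κ x) ⟨x, rfl⟩, fun x y hxy hκ => ?_⟩
  show C (κ x) ⟨x, rfl⟩ ≠ C (κ y) ⟨y, rfl⟩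
  rw [← hfib (κ x) y hκ.symm]
  exact (C (κ x)).valid (v := ⟨x, rfl⟩) (w := ⟨y, hκ.symm⟩) hxy

theorem Colorable.of_induce_fibers (κ : V → ι) (hκ : ∀ x y, G.Adj x y → κ x = κ y)
    (h : ∀ c, (G.induce {x | κ x = c}).Colorable n) : G.Colorable n := by
  obtain ⟨C, hC⟩ := exists_coloring_of_induce_fibers κ h
  exact ⟨Coloring.mk C fun hxy => hC _ _ hxy (hκ _ _ hxy)⟩

theorem Colorable.mul_of_induce_fibers [Fintype ι] (κ : V → ι)
    (h : ∀ c, (G.induce {x | κ x = c}).Colorable n) : G.Colorable (Fintype.card ι * n) := by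
  obtain ⟨C, hC⟩ := exists_coloring_of_induce_fibers κ h
  have := (Coloring.mk (fun x => (κ x, C x)) fun {x y} hxy he =>
    hC x y hxy (congrArg Prod.fst he) (congrArg Prod.snd he)).colorable
  simpa using this

theorem Colorable.pow_of_le_iSup [Fintype ι] {H : ι → SimpleGraph V} (hG : G ≤ ⨆ i, H i)
    (h : ∀ i, (H i).Colorable n) : G.Colorable (n ^ Fintype.card ι) := by
  classical
  let C := fun i => (h i).some
  have := (Coloring.mk (fun x i => C i x) fun {x y} hxy he => by
    obtain ⟨i, hi⟩ := iSup_adj.1 (hG hxy)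
    exact (C i).valid hi (congrFun he i)).colorable
  simpa using this

theorem colorable_one_fromRel_eq_and_of_ne {α : Type*} {R : V → V → Prop} (a b : V → α)
    (hab : ∀ x y, a x ≠ b y) :
    (fromRel fun x y => a x = b y ∧ R x y).Colorable 1 := by
  refine colorable_one_iff.2 (eq_bot_iff.2 fun x y hxy => ?_)
  rcases ((fromRel_adj _ _ _).1 hxy).2 with h | h
  exacts [hab _ _ h.1, hab _ _ h.1]

theorem colorable_fromRel_of_isStrictOrder [Finite V] (r : V → V → Prop) [IsStrictOrder V r]
    (hG : (fromRel r).CliqueFree n) : (fromRel r).Colorable n := by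
  let _ := partialOrderOfSO r
  have hheight : ∀ x : V, Order.height x < n := by
    intro x
    by_contra! hx
    obtain ⟨p, -, hp⟩ := Order.exists_series_of_le_height x hx
    refine hG.not_pairwise_adj (fun i => p (Fin.cast (by omega) i.castSucc)) fun i j hij => ?_
    rcases hij.lt_or_gt with hij | hij
    · exact (fromRel_adj _ _ _).2 ⟨(p.strictMono hij).ne, Or.inl (p.strictMono hij)⟩
    · exact (fromRel_adj _ _ _).2 ⟨(p.strictMono hij).ne', Or.inr (p.strictMono hij)⟩
  have hcast : ∀ x : V, ((Order.height x).toNat : ℕ∞) = Order.height x := fun x =>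
    ENat.natCast_toNat_eq_self.2 (hheight x).ne_top
  refine ⟨Coloring.mk (fun x => ⟨(Order.height x).toNat, ?_⟩) fun {x y} hxy he => ?_⟩
  · exact_mod_cast (hcast x).symm ▸ hheight x
  · have he : Order.height x = Order.height y := by
      rw [← hcast x, ← hcast y, Fin.mk.inj_iff.1 he]
    rcases ((fromRel_adj _ _ _).1 hxy).2 with h | h
    · exact (Order.height_strictMono h (hheight x |>.trans (ENat.natCast_lt_top n))).ne he
    · exact (Order.height_strictMono h (hheight y |>.trans (ENat.natCast_lt_top n))).ne he.symm

end SimpleGraph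

/-- For `a < b`, the highest binary digit in which `a` and `b` differ: the dyadic interval of
length `2 ^ (splitLevel a b + 1)` with index `splitNode a b` has `a` in its left half and `b` in
its right half. The bound `a + b` of the search is only there to make it finite. -/
def splitLevel (a b : ℕ) : ℕ := Nat.findGreatest (fun j => a / 2 ^ j ≠ b / 2 ^ j) (a + b)

def splitNode (a b : ℕ) : ℕ := a / 2 ^ (splitLevel a b + 1)

theorem splitLevel_comm (a b : ℕ) : splitLevel a b = splitLevel b a := by
  simp only [splitLevel, ne_comm, add_comm]

theorem splitLevel_le {a b L : ℕ} (ha : a < 2 ^ (L + 1)) (hb : b < 2 ^ (L + 1)) :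
    splitLevel a b ≤ L := by
  by_contra! h
  have hpow : 2 ^ (L + 1) ≤ 2 ^ splitLevel a b := Nat.pow_le_pow_right two_pos h
  have hP : a / 2 ^ splitLevel a b ≠ b / 2 ^ splitLevel a b :=
    Nat.findGreatest_of_ne_zero (P := fun j => a / 2 ^ j ≠ b / 2 ^ j) rfl (by omega)
  rw [Nat.div_eq_of_lt (ha.trans_le hpow), Nat.div_eq_of_lt (hb.trans_le hpow)] at hP
  exact hP rfl

theorem div_two_pow_splitLevel {a b : ℕ} (h : a < b) :
    a / 2 ^ splitLevel a b = 2 * splitNode a b ∧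
      b / 2 ^ splitLevel a b = 2 * splitNode a b + 1 := by
  set j := splitLevel a b
  have hne : a / 2 ^ j ≠ b / 2 ^ j := Nat.findGreatest_spec
    (P := fun j => a / 2 ^ j ≠ b / 2 ^ j) (Nat.zero_le _) (by simpa using h.ne)
  have heq : a / 2 ^ (j + 1) = b / 2 ^ (j + 1) := by
    by_cases hj : j + 1 ≤ a + b
    · by_contra hc
      exact Nat.findGreatest_is_greatest (Nat.lt_succ_self j) hj hc
    · have hb : b < 2 ^ (j + 1) :=
        Nat.lt_two_pow_self.trans_le (Nat.pow_le_pow_right two_pos (by omega))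
      rw [Nat.div_eq_of_lt (h.trans hb), Nat.div_eq_of_lt hb]
  have hhalf : ∀ c, c / 2 ^ (j + 1) = c / 2 ^ j / 2 := fun c => by
    rw [Nat.div_div_eq_div_mul, pow_succ]
  have hmono : a / 2 ^ j ≤ b / 2 ^ j := Nat.div_le_div_right h.le
  unfold splitNode
  rw [hhalf a] at heq ⊢
  rw [hhalf b] at heq
  omega

theorem lt_of_splitNode_eq {a₁ b₁ a₂ b₂ : ℕ} (h₁ : a₁ < b₁) (h₂ : a₂ < b₂)
    (hj : splitLevel a₁ b₁ = splitLevel a₂ b₂) (hp : splitNode a₁ b₁ = splitNode a₂ b₂) :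
    a₁ < b₂ := by
  apply Nat.lt_of_div_lt_div (c := 2 ^ splitLevel a₁ b₁)
  rw [(div_two_pow_splitLevel h₁).1, hj, (div_two_pow_splitLevel h₂).2, hp]
  omega

theorem lt_of_splitNode_lt {a₁ b₁ a₂ b₂ : ℕ} (h₁ : a₁ < b₁) (h₂ : a₂ < b₂)
    (hj : splitLevel a₁ b₁ = splitLevel a₂ b₂) (hp : splitNode a₁ b₁ < splitNode a₂ b₂) :
    b₁ < a₂ := by
  apply Nat.lt_of_div_lt_div (c := 2 ^ splitLevel a₁ b₁)
  rw [(div_two_pow_splitLevel h₁).2, hj, (div_two_pow_splitLevel h₂).1]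
  omega

theorem lt_iff_splitNode_le {a₁ b₁ a₂ b₂ : ℕ} (h₁ : a₁ < b₁) (h₂ : a₂ < b₂)
    (hj : splitLevel a₁ b₁ = splitLevel a₂ b₂) :
    a₁ < b₂ ↔ splitNode a₁ b₁ ≤ splitNode a₂ b₂ := by
  refine ⟨fun h => ?_, fun hp => ?_⟩
  · by_contra! hp
    have := lt_of_splitNode_lt h₂ h₁ hj.symm hp
    omega
  · rcases hp.lt_or_eq with hp | hp
    · have := lt_of_splitNode_lt h₁ h₂ hj hp
      omega
    · exact lt_of_splitNode_eq h₁ h₂ hj hp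

theorem ne_of_splitLevel_eq {a₁ b₁ a₂ b₂ : ℕ} (h₁ : a₁ < b₁) (h₂ : a₂ < b₂)
    (hj : splitLevel a₁ b₁ = splitLevel a₂ b₂) : a₁ ≠ b₂ := by
  rcases le_or_gt (splitNode a₁ b₁) (splitNode a₂ b₂) with hp | hp
  · exact ((lt_iff_splitNode_le h₁ h₂ hj).2 hp).ne
  · have := lt_of_splitNode_lt h₂ h₁ hj.symm hp
    omega

open Finset in
theorem exists_nat_ranks {V α : Type*} [Finite V] [LinearOrder α] (U W : V → α) :
    ∃ a b : V → ℕ, (∀ x, a x < 2 * Nat.card V) ∧ (∀ x, b x < 2 * Nat.card V) ∧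
      ∀ x y, (U x < W y ↔ a x < b y) ∧ (U x = W y ↔ a x = b y) := by
  classical
  have := Fintype.ofFinite V
  let E : Finset α := univ.image U ∪ univ.image W
  let rank : α → ℕ := fun r => #{e ∈ E | e < r}
  have hrank : StrictMonoOn rank E := fun r hr r' _ h => by
    refine card_lt_card <| ssubset_iff_of_subset (fun e he => ?_) |>.2 ⟨r, ?_⟩
    · simp only [mem_filter] at he ⊢
      exact ⟨he.1, he.2.trans h⟩
    · simp [mem_coe.1 hr, h]
  have hcard : #E ≤ 2 * Nat.card V := by
    rw [Nat.card_eq_fintype_card, two_mul]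
    exact (card_union_le _ _).trans (add_le_add card_image_le card_image_le)
  have hlt : ∀ r ∈ E, rank r < 2 * Nat.card V := fun r hr =>
    (card_lt_card <| filter_ssubset (p := (· < r)).2 ⟨r, hr, lt_irrefl r⟩).trans_le hcard
  have hU : ∀ x, U x ∈ E := fun x => mem_union_left _ (mem_image_of_mem U (mem_univ x))
  have hW : ∀ x, W x ∈ E := fun x => mem_union_right _ (mem_image_of_mem W (mem_univ x))
  exact ⟨fun x => rank (U x), fun x => rank (W x), fun x => hlt _ (hU x), fun x => hlt _ (hW x),
    fun x y => ⟨(hrank.lt_iff_lt (hU x) (hW y)).symm, (hrank.injOn.eq_iff (hU x) (hW y)).symm⟩⟩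

open SimpleGraph

section Patterns

variable {V : Type*} {k l : ℕ}

/-- The induction runs on the number `k` of comparisons; the order constraints `ν` are free, as
every step adds one. -/
def PatternRel (U W : Fin k → V → ℝ) (o : Fin k → Ordering) (ν : Fin l → V → ℝ) (x y : V) :
    Prop :=
  (∀ i, compare (U i x) (W i y) = o i) ∧ ∀ j, ν j x < ν j y

theorem patternRel_cons (U W : Fin k → V → ℝ) (o : Fin k → Ordering) (φ : V → ℝ)
    (ν : Fin l → V → ℝ) (x y : V) :
    PatternRel U W o (Fin.cons φ ν : Fin (l + 1) → V → ℝ) x y ↔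
      φ x < φ y ∧ PatternRel U W o ν x y := by
  simp only [PatternRel, Fin.forall_fin_succ, Fin.cons_zero, Fin.cons_succ]
  tauto

theorem patternRel_succ (U W : Fin (k + 1) → V → ℝ) (o : Fin (k + 1) → Ordering)
    (ν : Fin l → V → ℝ) (x y : V) :
    PatternRel U W o ν x y ↔ compare (U 0 x) (W 0 y) = o 0 ∧
      PatternRel (fun i => U i.succ) (fun i => W i.succ) (fun i => o i.succ) ν x y := by
  simp only [PatternRel, Fin.forall_fin_succ]
  tauto

end Patterns

def PatternColorable (s Λ k B : ℕ) : Prop :=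
  ∀ {V : Type} [Finite V] {l : ℕ} (U W : Fin k → V → ℝ) (o : Fin k → Ordering)
    (ν : Fin l → V → ℝ), Nat.card V ≤ 2 ^ Λ → (fromRel (PatternRel U W o ν)).CliqueFree s →
      (fromRel (PatternRel U W o ν)).Colorable B

theorem patternColorable_zero (s Λ : ℕ) : PatternColorable s Λ 0 s := by
  intro V _ l U W o ν _ hG
  rcases Nat.eq_zero_or_pos l with rfl | hl
  · have := Fintype.ofFinite V
    have hcard : Fintype.card V < s := by
      by_contra! h
      obtain ⟨f⟩ := Function.Embedding.nonempty_of_card_le (α := Fin s) (β := V) (by simpa using h)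
      exact hG.not_pairwise_adj f fun i j hij =>
        (fromRel_adj _ _ _).2 ⟨f.injective.ne hij, Or.inl ⟨finZeroElim, finZeroElim⟩⟩
    exact (colorable_of_fintype _).mono hcard.le
  · let r : V → V → Prop := fun x y => ∀ j, ν j x < ν j y
    have : IsStrictOrder V r :=
      { irrefl := fun x h => lt_irrefl _ (h ⟨0, hl⟩)
        trans := fun _ _ _ h h' j => (h j).trans (h' j) }
    have hr : PatternRel U W o ν = r :=
      funext₂ fun x y => propext ⟨And.right, And.intro finZeroElim⟩
    rw [hr] at hG ⊢
    exact colorable_fromRel_of_isStrictOrder r hG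

section Step

variable {s Λ k B : ℕ} {T ι : Type} [Finite T] {R : T → T → Prop} {l : ℕ}

theorem PatternColorable.colorable_of_iff (IH : PatternColorable s Λ k B)
    (hT : Nat.card T ≤ 2 ^ Λ) (U W : Fin k → T → ℝ) (o : Fin k → Ordering) (ν : Fin l → T → ℝ)
    (hR : ∀ x y, R x y ↔ PatternRel U W o ν x y) (hG : (fromRel R).CliqueFree s) :
    (fromRel R).Colorable B := by
  obtain rfl : R = PatternRel U W o ν := funext₂ fun x y => propext (hR x y)
  exact IH U W o ν hT hG

theorem PatternColorable.colorable_of_iff_of_fibers (IH : PatternColorable s Λ k B)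
    (hT : Nat.card T ≤ 2 ^ Λ) (U W : Fin k → T → ℝ) (o : Fin k → Ordering) (ν : Fin l → T → ℝ)
    (κ : T → ι) (hκ : ∀ x y, R x y → κ x = κ y)
    (hR : ∀ x y, κ x = κ y → (R x y ↔ PatternRel U W o ν x y)) (hG : (fromRel R).CliqueFree s) :
    (fromRel R).Colorable B := by
  refine Colorable.of_induce_fibers κ (fun x y hxy => ?_) fun c => ?_
  · rcases ((fromRel_adj _ _ _).1 hxy).2 with h | h
    exacts [hκ _ _ h, (hκ _ _ h).symm]
  · have hG' := hG.induce {x | κ x = c}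
    rw [induce_fromRel] at hG' ⊢
    exact IH.colorable_of_iff ((Finite.card_subtype_le _).trans hT) (fun i x => U i x)
      (fun i x => W i x) o (fun j x => ν j x) (fun x y => hR x y (x.2.trans y.2.symm)) hG'

theorem PatternColorable.colorable_fromRel_lt_of_forall_lt (IH : PatternColorable s Λ k B)
    (hT : Nat.card T ≤ 2 ^ Λ) (a b : T → ℕ) (U W : Fin k → T → ℝ) (o : Fin k → Ordering)
    (ν : Fin l → T → ℝ) (hab : ∀ x, a x < b x)
    (hlev : ∀ x y, splitLevel (a x) (b x) = splitLevel (a y) (b y))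
    (hG : (fromRel fun x y => a x < b y ∧ PatternRel U W o ν x y).CliqueFree s) :
    (fromRel fun x y => a x < b y ∧ PatternRel U W o ν x y).Colorable (B ^ 2) := by
  -- Within one level, `a x < b y` holds for pairs in the same dyadic interval and otherwise
  -- orders the pair by interval index.
  let q x := splitNode (a x) (b x)
  have hsplit : (fromRel fun x y => a x < b y ∧ PatternRel U W o ν x y) =
      fromRel (fun x y => q x = q y ∧ PatternRel U W o ν x y) ⊔
        fromRel (fun x y => q x < q y ∧ PatternRel U W o ν x y) := by
    rw [← fromRel_or]
    congr
    ext x y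
    rw [lt_iff_splitNode_le (hab x) (hab y) (hlev x y), le_iff_eq_or_lt, or_and_right]
  rw [hsplit] at hG ⊢
  rw [sup_eq_iSup, ← Fintype.card_bool]
  refine Colorable.pow_of_le_iSup le_rfl ?_
  rintro (_ | _)
  · refine IH.colorable_of_iff hT U W o (Fin.cons (fun x => (q x : ℝ)) ν) (fun x y => ?_)
      (hG.anti le_sup_right)
    rw [patternRel_cons, Nat.cast_lt]
  · exact IH.colorable_of_iff_of_fibers hT U W o ν q (fun _ _ h => h.1)
      (fun _ _ h => and_iff_right h) (hG.anti le_sup_left)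

theorem PatternColorable.colorable_fromRel_lt_of_forall_gt (IH : PatternColorable s Λ k B)
    (hT : Nat.card T ≤ 2 ^ Λ) (a b : T → ℕ) (U W : Fin k → T → ℝ) (o : Fin k → Ordering)
    (ν : Fin l → T → ℝ) (hab : ∀ x, b x < a x)
    (hlev : ∀ x y, splitLevel (b x) (a x) = splitLevel (b y) (a y))
    (hG : (fromRel fun x y => a x < b y ∧ PatternRel U W o ν x y).CliqueFree s) :
    (fromRel fun x y => a x < b y ∧ PatternRel U W o ν x y).Colorable B := by
  let q x := splitNode (b x) (a x)
  refine IH.colorable_of_iff hT U W o (Fin.cons (fun x => (q x : ℝ)) ν) (fun x y => ?_) hG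
  rw [patternRel_cons, Nat.cast_lt, ← not_le, ← not_le,
    (ne_of_splitLevel_eq (hab y) (hab x) (hlev y x)).le_iff_lt,
    lt_iff_splitNode_le (hab y) (hab x) (hlev y x)]

theorem PatternColorable.colorable_fromRel_lt_of_forall_eq (IH : PatternColorable s Λ k B)
    (hT : Nat.card T ≤ 2 ^ Λ) (a b : T → ℕ) (U W : Fin k → T → ℝ) (o : Fin k → Ordering)
    (ν : Fin l → T → ℝ) (hab : ∀ x, a x = b x)
    (hG : (fromRel fun x y => a x < b y ∧ PatternRel U W o ν x y).CliqueFree s) :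
    (fromRel fun x y => a x < b y ∧ PatternRel U W o ν x y).Colorable B := by
  refine IH.colorable_of_iff hT U W o (Fin.cons (fun x => (a x : ℝ)) ν) (fun x y => ?_) hG
  rw [patternRel_cons, Nat.cast_lt, hab y]

theorem PatternColorable.colorable_fromRel_eq_of_forall_eq (IH : PatternColorable s Λ k B)
    (hT : Nat.card T ≤ 2 ^ Λ) (a b : T → ℕ) (U W : Fin k → T → ℝ) (o : Fin k → Ordering)
    (ν : Fin l → T → ℝ) (hab : ∀ x, a x = b x)
    (hG : (fromRel fun x y => a x = b y ∧ PatternRel U W o ν x y).CliqueFree s) :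
    (fromRel fun x y => a x = b y ∧ PatternRel U W o ν x y).Colorable B :=
  IH.colorable_of_iff_of_fibers hT U W o ν a (fun _ y h => h.1.trans (hab y).symm)
    (fun _ y h => and_iff_right (h.trans (hab y))) hG

theorem colorable_fromRel_of_splitLevel_fibers {V : Type} [Finite V] (hV : Nat.card V ≤ 2 ^ Λ)
    {R : V → V → Prop} (hG : (fromRel R).CliqueFree s) {n : ℕ} (a b : V → ℕ)
    (ha : ∀ x, a x < 2 * Nat.card V) (hb : ∀ x, b x < 2 * Nat.card V)
    (h : ∀ (S : Set V), Nat.card S ≤ 2 ^ Λ → (fromRel fun x y : S => R x y).CliqueFree s →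
      ∀ o, (∀ x : S, compare (a x) (b x) = o) →
      (∀ x y : S, splitLevel (a x) (b x) = splitLevel (a y) (b y)) →
      (fromRel fun x y : S => R x y).Colorable n) :
    (fromRel R).Colorable (3 * (Λ + 1) * n) := by
  have h2 : 2 * Nat.card V ≤ 2 ^ (Λ + 1) := by rw [pow_succ]; omega
  let κ : V → Ordering × Fin (Λ + 1) := fun x =>
    (compare (a x) (b x), ⟨splitLevel (a x) (b x),
      Nat.lt_succ_of_le (splitLevel_le ((ha x).trans_le h2) ((hb x).trans_le h2))⟩)
  have := Colorable.mul_of_induce_fibers κ fun c => by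
    have hG' := hG.induce {x | κ x = c}
    rw [induce_fromRel] at hG' ⊢
    have hκ : ∀ x : {x | κ x = c}, κ x = c := fun x => x.2
    refine h _ ((Finite.card_subtype_le _).trans hV) hG' c.1 (fun x => congrArg Prod.fst (hκ x))
      fun x y => ?_
    simpa [κ, Fin.ext_iff] using congrArg Prod.snd ((hκ x).trans (hκ y).symm)
  simpa [show Fintype.card Ordering = 3 from rfl] using this

theorem PatternColorable.colorable_fromRel_lt_and (IH : PatternColorable s Λ k B)
    {V : Type} [Finite V] (hV : Nat.card V ≤ 2 ^ Λ) (U₀ W₀ : V → ℝ) (U W : Fin k → V → ℝ)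
    (o : Fin k → Ordering) (ν : Fin l → V → ℝ)
    (hG : (fromRel fun x y => U₀ x < W₀ y ∧ PatternRel U W o ν x y).CliqueFree s) :
    (fromRel fun x y => U₀ x < W₀ y ∧ PatternRel U W o ν x y).Colorable (3 * (Λ + 1) * B ^ 2) := by
  obtain ⟨a, b, ha, hb, hab⟩ := exists_nat_ranks U₀ W₀
  have hR : (fun x y => U₀ x < W₀ y ∧ PatternRel U W o ν x y) =
      fun x y => a x < b y ∧ PatternRel U W o ν x y := by
    ext x y
    rw [(hab x y).1]
  rw [hR] at hG ⊢
  refine colorable_fromRel_of_splitLevel_fibers hV hG a b ha hb fun S hT hG' o₀ hcmp hlev => ?_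
  let a' : S → ℕ := fun x => a x
  let b' : S → ℕ := fun x => b x
  let U' : Fin k → S → ℝ := fun i x => U i x
  let W' : Fin k → S → ℝ := fun i x => W i x
  let ν' : Fin l → S → ℝ := fun j x => ν j x
  have hle : B ≤ B ^ 2 := Nat.le_self_pow two_ne_zero B
  cases o₀
  · exact IH.colorable_fromRel_lt_of_forall_lt hT a' b' U' W' o ν'
      (fun x => compare_lt_iff_lt.1 (hcmp x)) hlev hG'
  · exact (IH.colorable_fromRel_lt_of_forall_eq hT a' b' U' W' o ν'
      (fun x => compare_eq_iff_eq.1 (hcmp x)) hG').mono hle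
  · exact (IH.colorable_fromRel_lt_of_forall_gt hT a' b' U' W' o ν'
      (fun x => compare_gt_iff_gt.1 (hcmp x))
      (fun x y => by rw [splitLevel_comm, hlev x y, splitLevel_comm]) hG').mono hle

theorem PatternColorable.colorable_fromRel_eq_and (IH : PatternColorable s Λ k B) (hB : 0 < B)
    {V : Type} [Finite V] (hV : Nat.card V ≤ 2 ^ Λ) (U₀ W₀ : V → ℝ) (U W : Fin k → V → ℝ)
    (o : Fin k → Ordering) (ν : Fin l → V → ℝ)
    (hG : (fromRel fun x y => U₀ x = W₀ y ∧ PatternRel U W o ν x y).CliqueFree s) :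
    (fromRel fun x y => U₀ x = W₀ y ∧ PatternRel U W o ν x y).Colorable (3 * (Λ + 1) * B ^ 2) := by
  obtain ⟨a, b, ha, hb, hab⟩ := exists_nat_ranks U₀ W₀
  have hR : (fun x y => U₀ x = W₀ y ∧ PatternRel U W o ν x y) =
      fun x y => a x = b y ∧ PatternRel U W o ν x y := by
    ext x y
    rw [(hab x y).2]
  rw [hR] at hG ⊢
  refine colorable_fromRel_of_splitLevel_fibers hV hG a b ha hb fun S hT hG' o₀ hcmp hlev => ?_
  cases o₀
  · refine (colorable_one_fromRel_eq_and_of_ne _ _ fun x y => ?_).mono (Nat.one_le_pow _ _ hB)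
    exact ne_of_splitLevel_eq (compare_lt_iff_lt.1 (hcmp x)) (compare_lt_iff_lt.1 (hcmp y))
      (hlev x y)
  · exact (IH.colorable_fromRel_eq_of_forall_eq hT (fun x => a x) (fun x => b x)
      (fun i x => U i x) (fun i x => W i x) o (fun j x => ν j x)
      (fun x => compare_eq_iff_eq.1 (hcmp x)) hG').mono (Nat.le_self_pow two_ne_zero B)
  · refine (colorable_one_fromRel_eq_and_of_ne _ _ fun x y => Ne.symm ?_).mono
      (Nat.one_le_pow _ _ hB)
    exact ne_of_splitLevel_eq (compare_gt_iff_gt.1 (hcmp y)) (compare_gt_iff_gt.1 (hcmp x))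
      (by rw [splitLevel_comm, hlev y x, splitLevel_comm])

end Step

def colorBound (s Λ : ℕ) : ℕ → ℕ
  | 0 => s
  | k + 1 => 3 * (Λ + 1) * colorBound s Λ k ^ 2

theorem colorBound_pos {s : ℕ} (Λ : ℕ) (hs : 0 < s) : ∀ k, 0 < colorBound s Λ k
  | 0 => hs
  | k + 1 => by
    have := colorBound_pos Λ hs k
    rw [colorBound]
    positivity

theorem mul_colorBound (s Λ k : ℕ) :
    3 * (Λ + 1) * colorBound s Λ k = (3 * (Λ + 1) * s) ^ 2 ^ k := by
  induction k with
  | zero => simp [colorBound]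
  | succ k ih => rw [colorBound, pow_succ 2 k, pow_mul, ← ih]; ring

theorem patternColorable_colorBound {s : ℕ} (Λ : ℕ) (hs : 0 < s) :
    ∀ k, PatternColorable s Λ k (colorBound s Λ k)
  | 0 => patternColorable_zero s Λ
  | k + 1 => fun U W o ν hV hG => by
    have IH : PatternColorable s Λ k (colorBound s Λ k) := patternColorable_colorBound Λ hs k
    rw [colorBound]
    let U₀ := U 0
    let W₀ := W 0
    let P := PatternRel (fun i => U i.succ) (fun i => W i.succ) (fun i => o i.succ) ν
    have hsucc : PatternRel U W o ν = fun x y => compare (U₀ x) (W₀ y) = o 0 ∧ P x y := by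
      ext x y
      exact patternRel_succ U W o ν x y
    rw [hsucc] at hG ⊢
    generalize o 0 = o₀ at hG ⊢
    cases o₀
    · simp only [compare_lt_iff_lt] at hG ⊢
      exact IH.colorable_fromRel_lt_and hV _ _ _ _ _ _ hG
    · simp only [compare_eq_iff_eq] at hG ⊢
      exact IH.colorable_fromRel_eq_and (colorBound_pos Λ hs k) hV _ _ _ _ _ _ hG
    · have hneg : (fun x y => compare (U₀ x) (W₀ y) = .gt ∧ P x y) =
          fun x y => -U₀ x < -W₀ y ∧ P x y := by
        ext x y
        rw [compare_gt_iff_gt, neg_lt_neg_iff]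
      rw [hneg] at hG ⊢
      exact IH.colorable_fromRel_lt_and hV _ _ _ _ _ _ hG

theorem colorBound_le (s Λ k : ℕ) : colorBound s Λ k ≤ (3 * (Λ + 1) * s) ^ 2 ^ k :=
  (mul_colorBound s Λ k).symm ▸ Nat.le_mul_of_pos_left _ (by positivity)

theorem IsSemilinear.exists_adj_iff_compare {V : Type} {G : SimpleGraph V} {t : ℕ}
    (hG : IsSemilinear G t) :
    ∃ (U W : Fin t → V → ℝ) (ψ : (Fin t → Ordering) → Prop),
      ∀ x y, x ≠ y → (G.Adj x y ↔ ψ fun i => compare (U i x) (W i y)) := by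
  obtain ⟨d, -, v, -, f, hf, φ, hφ⟩ := hG
  choose a b c hlin using hf
  refine ⟨fun i x => c i + ∑ j, a i j * v x j, fun i y => -∑ j, b i j * v y j,
    fun σ => φ fun i => (σ i = .lt, σ i ≠ .gt, σ i = .eq), fun x y hxy => ?_⟩
  rw [hφ x y hxy]
  refine Iff.of_eq (congrArg φ (funext fun i => ?_))
  have hfi : f i (v x) (v y) = (c i + ∑ j, a i j * v x j) - -∑ j, b i j * v y j := by
    rw [hlin]
    ring
  simp only [hfi, sub_neg, sub_nonpos, sub_eq_zero, compare_lt_iff_lt, compare_eq_iff_eq, ne_eq,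
    compare_gt_iff_gt, not_lt]

theorem colorable_of_adj_iff_compare {V : Type} [Finite V] {G : SimpleGraph V} {s Λ t : ℕ}
    (hs : 0 < s) (hV : Nat.card V ≤ 2 ^ Λ) (U W : Fin t → V → ℝ) (ψ : (Fin t → Ordering) → Prop)
    (hadj : ∀ x y, x ≠ y → (G.Adj x y ↔ ψ fun i => compare (U i x) (W i y)))
    (hG : G.CliqueFree s) : G.Colorable (colorBound s Λ t ^ 3 ^ t) := by
  classical
  let H : (Fin t → Ordering) → SimpleGraph V := fun σ =>
    if ψ σ then fromRel (PatternRel U W σ fun j => j.elim0) else ⊥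
  have hle : G ≤ ⨆ σ, H σ := fun x y hxy => by
    refine iSup_adj.2 ⟨fun i => compare (U i x) (W i y), ?_⟩
    simp only [H, if_pos ((hadj x y hxy.ne).1 hxy)]
    exact (fromRel_adj _ _ _).2 ⟨hxy.ne, Or.inl ⟨fun _ => rfl, fun j => j.elim0⟩⟩
  have hcol : ∀ σ, (H σ).Colorable (colorBound s Λ t) := fun σ => by
    by_cases hσ : ψ σ
    · have hHG : fromRel (PatternRel U W σ fun j => j.elim0) ≤ G := fun x y hxy => by
        obtain ⟨hne, h | h⟩ := (fromRel_adj _ _ _).1 hxy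
        · exact (hadj x y hne).2 (funext h.1 ▸ hσ)
        · exact ((hadj y x hne.symm).2 (funext h.1 ▸ hσ)).symm
      simp only [H, if_pos hσ]
      exact patternColorable_colorBound Λ hs t U W σ _ hV (hG.anti hHG)
    · simp only [H, if_neg hσ]
      exact (colorable_one_iff.2 rfl).mono (colorBound_pos Λ hs t)
  simpa [show Fintype.card Ordering = 3 from rfl] using Colorable.pow_of_le_iSup hle hcol

theorem stmt3_general (t : ℕ) :
    ∃ α β γ : ℝ, 0 < α ∧ 0 < β ∧ 0 < γ ∧
      ∀ (s n : ℕ), 0 < s → 2 ≤ n →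
        ∀ (V : Type) [Fintype V] (G : SimpleGraph V),
          Fintype.card V = n → IsSemilinear G t → G.CliqueFree s →
          ∃ m : ℕ, G.chromaticNumber ≤ (m : ℕ∞) ∧
            (m : ℝ) ≤ α * (s : ℝ) ^ β * (Real.logb 2 n) ^ γ := by
  refine ⟨9 ^ 6 ^ t, (6 ^ t : ℕ), (6 ^ t : ℕ), by positivity, by positivity, by positivity, ?_⟩
  intro s n hs hn V _ G hcard hsem hfree
  obtain ⟨U, W, ψ, hadj⟩ := hsem.exists_adj_iff_compare
  have hV : Nat.card V ≤ 2 ^ (Nat.log 2 n + 1) := by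
    rw [Nat.card_eq_fintype_card, hcard]
    exact (Nat.lt_pow_succ_log_self one_lt_two n).le
  refine ⟨_, (colorable_of_adj_iff_compare hs hV U W ψ hadj hfree).chromaticNumber_le, ?_⟩
  have hlog : (3 * (Nat.log 2 n + 1 + 1) : ℝ) ≤ 9 * Real.logb 2 n := by
    have h1 : (1 : ℝ) ≤ Nat.log 2 n := by exact_mod_cast Nat.log_pos one_lt_two hn
    have h2 := Real.natLog_le_logb n 2
    push_cast at h2
    linarith
  rw [Real.rpow_natCast, Real.rpow_natCast]
  calc ((colorBound s (Nat.log 2 n + 1) t ^ 3 ^ t : ℕ) : ℝ)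
      ≤ (((3 * (Nat.log 2 n + 1 + 1) * s) ^ 2 ^ t) ^ 3 ^ t : ℕ) := by
        exact_mod_cast Nat.pow_le_pow_left (colorBound_le s _ t) _
    _ = (3 * (Nat.log 2 n + 1 + 1) * s : ℝ) ^ 6 ^ t := by
        push_cast
        rw [← pow_mul, ← mul_pow]
        norm_num
    _ ≤ (9 * Real.logb 2 n * s) ^ 6 ^ t := by gcongr
    _ = 9 ^ 6 ^ t * (s : ℝ) ^ 6 ^ t * Real.logb 2 n ^ 6 ^ t := by ring

/-- For every positive integer `t` there are constants `α, β, γ > 0` such that every semilinear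
graph of complexity `t` on `n ≥ 2` vertices with no clique of size `s` has chromatic number at
most `α·s^β·(log₂ n)^γ`. -/
theorem stmt3 (t : ℕ) (ht : 0 < t) :
    ∃ α β γ : ℝ, 0 < α ∧ 0 < β ∧ 0 < γ ∧
      ∀ (s n : ℕ), 0 < s → 2 ≤ n →
        ∀ (V : Type) [Fintype V] (G : SimpleGraph V),
          Fintype.card V = n → IsSemilinear G t → G.CliqueFree s →
          ∃ m : ℕ, G.chromaticNumber ≤ (m : ℕ∞) ∧
            (m : ℝ) ≤ α * (s : ℝ) ^ β * (Real.logb 2 n) ^ γ :=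
  stmt3_general t
end

section
/- For all positive integers t and u there exist constants α = α(t,u) > 0 and β = β(u) > 0 (β depending only on u) such that for every positive integer n, every semilinear* graph of complexity (t,u) with more than α·n^β vertices contains a clique of size n or an independent set of size n. (Equivalently, R_{t,u}(n) ≤ α·n^β.) -/
/-- `G` is a semilinear* graph of complexity `(t,u)`: the vertices can be identified with points
of `ℝ^d`, and `x,y` are adjacent iff `⋁_{i∈[u]} ⋀_{j∈[t]} f_{i,j}(x,y) < 0`. -/
def IsSemilinearStar {V : Type} (G : SimpleGraph V) (t u : ℕ) : Prop :=
  ∃ d : ℕ, 0 < d ∧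
    ∃ v : V → Fin d → ℝ, Function.Injective v ∧
      ∃ f : Fin u → Fin t → (Fin d → ℝ) → (Fin d → ℝ) → ℝ,
        (∀ i j, IsLinearPair (f i j)) ∧
        ∀ x y : V, x ≠ y →
          (G.Adj x y ↔ ∃ i : Fin u, ∀ j : Fin t, f i j (v x) (v y) < 0)

open Finset

/-- The largest `e` such that the interval `(I.1, I.2]` contains a multiple of `2 ^ e`. -/
def dyadicLevel (I : ℕ × ℕ) : ℕ := Nat.findGreatest (fun e => I.1 / 2 ^ e < I.2 / 2 ^ e) I.2

/-- `(I.1, I.2]` contains exactly one multiple of `2 ^ dyadicLevel I`, namely `2 ^ dyadicLevel I`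
times this odd number. -/
def dyadicMid (I : ℕ × ℕ) : ℕ := I.2 / 2 ^ dyadicLevel I

theorem div_two_pow_dyadicLevel {I : ℕ × ℕ} (h : I.1 < I.2) :
    I.1 / 2 ^ dyadicLevel I + 1 = dyadicMid I ∧ dyadicMid I % 2 = 1 := by
  let P e := I.1 / 2 ^ e < I.2 / 2 ^ e
  have hlt : P (dyadicLevel I) := Nat.findGreatest_spec (P := P) (Nat.zero_le _) (by simpa [P])
  have hnext : ¬ P (dyadicLevel I + 1) := by
    by_cases he : dyadicLevel I + 1 ≤ I.2
    · exact Nat.findGreatest_is_greatest (P := P) (Nat.lt_succ_self _) he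
    · have : I.2 < 2 ^ (dyadicLevel I + 1) := (Nat.lt_of_not_le he).trans Nat.lt_two_pow_self
      simp [P, Nat.div_eq_of_lt this]
  simp only [P, pow_succ, ← Nat.div_div_eq_div_mul] at hlt hnext
  unfold dyadicMid
  omega

theorem dyadicLevel_le_log {I : ℕ × ℕ} (h : I.1 < I.2) : dyadicLevel I ≤ Nat.log 2 I.2 := by
  have hpos : 0 < dyadicMid I := (div_two_pow_dyadicLevel h).1 ▸ Nat.succ_pos _
  exact Nat.le_log_of_pow_le one_lt_two (Nat.div_pos_iff.1 hpos).2

/-- Distinct midpoints of the same level lie in disjoint dyadic blocks of length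
`2 ^ (level + 1)`. -/
theorem lt_iff_dyadicMid_le {I J : ℕ × ℕ} (hI : I.1 < I.2) (hJ : J.1 < J.2)
    (he : dyadicLevel I = dyadicLevel J) : I.1 < J.2 ↔ dyadicMid I ≤ dyadicMid J := by
  obtain ⟨hI₁, hI₂⟩ := div_two_pow_dyadicLevel hI
  obtain ⟨hJ₁, hJ₂⟩ := div_two_pow_dyadicLevel hJ
  have hJmid : dyadicMid J = J.2 / 2 ^ dyadicLevel I := by rw [he]; rfl
  constructor
  · intro h
    have := Nat.div_le_div_right (c := 2 ^ dyadicLevel I) h.le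
    omega
  · intro h
    exact Nat.lt_of_div_lt_div (c := 2 ^ dyadicLevel I) (by omega)

/-- `(l, h]` if `l < h`, and otherwise `(h, l + 1]`, so that `l₁ < h₂` says that `[h₁, l₁]`
lies strictly left of `[h₂, l₂]`. -/
def orientedInterval (l h : ℕ) : ℕ × ℕ := if l < h then (l, h) else (h, l + 1)

theorem orientedInterval_fst_lt_snd (l h : ℕ) :
    (orientedInterval l h).1 < (orientedInterval l h).2 := by
  unfold orientedInterval; split_ifs <;> simp only <;> omega

theorem orientedInterval_snd_le {l h K : ℕ} (hl : l < K) (hh : h < K) :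
    (orientedInterval l h).2 ≤ K := by
  unfold orientedInterval; split_ifs <;> simp only <;> omega

def dyadicKey (l h : ℕ) : ℕ × Bool := (dyadicLevel (orientedInterval l h), decide (l < h))

theorem dyadicKey_fst_le_log {l h K : ℕ} (hl : l < K) (hh : h < K) :
    (dyadicKey l h).1 ≤ Nat.log 2 K :=
  (dyadicLevel_le_log (orientedInterval_fst_lt_snd l h)).trans
    (Nat.log_mono_right (orientedInterval_snd_le hl hh))

theorem lt_iff_of_dyadicKey_eq {l₁ h₁ l₂ h₂ : ℕ} (hk : dyadicKey l₁ h₁ = dyadicKey l₂ h₂) :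
    l₁ < h₂ ↔ if (dyadicKey l₁ h₁).2 then
      dyadicMid (orientedInterval l₁ h₁) ≤ dyadicMid (orientedInterval l₂ h₂) else
      dyadicMid (orientedInterval l₁ h₁) < dyadicMid (orientedInterval l₂ h₂) := by
  obtain ⟨he, hlt⟩ := Prod.ext_iff.1 hk
  simp only [dyadicKey, decide_eq_decide] at he hlt
  have key := lt_iff_dyadicMid_le (orientedInterval_fst_lt_snd l₁ h₁)
    (orientedInterval_fst_lt_snd l₂ h₂) he
  have key' := lt_iff_dyadicMid_le (orientedInterval_fst_lt_snd l₂ h₂)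
    (orientedInterval_fst_lt_snd l₁ h₁) he.symm
  by_cases hl : l₁ < h₁
  · simp only [dyadicKey, orientedInterval, hl, hlt.1 hl, if_true, decide_true] at key ⊢
    exact key
  · simp only [dyadicKey, orientedInterval, hl, mt hlt.2 hl, if_false, decide_false, Bool.false_eq_true] at key' ⊢
    rw [← not_iff_not, not_lt, not_lt, ← key']
    omega

theorem Finset.exists_forall_ne_rel_of_isChain {α : Type*} {r : α → α → Prop} [IsTrans α r]
    [Std.Irrefl r] {T : Finset α} (hT : IsChain r (T : Set α)) (hne : T.Nonempty) :
    ∃ c ∈ T, ∀ z ∈ T, z ≠ c → r c z := by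
  classical
  obtain ⟨c, hcT, hc⟩ := T.exists_min_image (fun x => #(T.filter (r · x))) hne
  refine ⟨c, hcT, fun z hz hzc =>
    (hT hcT hz (Ne.symm hzc)).resolve_right fun hzc' => (hc z hz).not_gt ?_⟩
  refine card_lt_card ((ssubset_iff_of_subset fun w hw => ?_).2 ⟨z, ?_, ?_⟩)
  · exact mem_filter.2 ⟨(mem_filter.1 hw).1, trans_of r (mem_filter.1 hw).2 hzc'⟩
  · exact mem_filter.2 ⟨hz, hzc'⟩
  · exact fun h => irrefl_of r z (mem_filter.1 h).2

/-- Mirsky's theorem. -/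
theorem Finset.card_le_mul_of_isChain_of_isAntichain {α : Type*} {r : α → α → Prop}
    [IsTrans α r] [Std.Irrefl r] {a b : ℕ} (S : Finset α)
    (ha : ∀ T ⊆ S, IsChain r (T : Set α) → #T ≤ a)
    (hb : ∀ T ⊆ S, IsAntichain r (T : Set α) → #T ≤ b) : #S ≤ a * b := by
  classical
  induction a generalizing S with
  | zero =>
    rw [zero_mul, Nat.le_zero, card_eq_zero, eq_empty_iff_forall_notMem]
    intro x hx
    simpa using ha {x} (singleton_subset_iff.2 hx) (by simp)
  | succ a ih =>
    let IsMin x := ∀ y ∈ S, ¬ r y x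
    have hmin : #(S.filter IsMin) ≤ b :=
      hb _ (filter_subset _ _) fun x hx y hy _ => (mem_filter.1 hy).2 x (mem_filter.1 hx).1
    have hrest : #(S.filter fun x => ¬ IsMin x) ≤ a * b := by
      refine ih _ (fun T hTS hT => ?_) fun T hTS hT => hb T (hTS.trans (filter_subset _ _)) hT
      rcases T.eq_empty_or_nonempty with rfl | hne
      · simp
      -- the least element `c` of `T` has a predecessor `y` in `S`, which extends `T`
      obtain ⟨c, hcT, hcz⟩ := exists_forall_ne_rel_of_isChain hT hne
      obtain ⟨y, hyS, hyc⟩ : ∃ y ∈ S, r y c := by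
        simpa [IsMin] using (mem_filter.1 (hTS hcT)).2
      have hyz : ∀ z ∈ T, r y z := fun z hz =>
        if h : z = c then h ▸ hyc else trans_of r hyc (hcz z hz h)
      have hyT : y ∉ T := fun h => irrefl_of r y (hyz y h)
      have := ha (insert y T) (insert_subset hyS (hTS.trans (filter_subset _ _)))
        (by rw [coe_insert]; exact hT.insert fun z hz _ => Or.inl (hyz z hz))
      rw [card_insert_of_notMem hyT] at this
      omega
    calc #S = #(S.filter IsMin) + #(S.filter fun x => ¬ IsMin x) :=
          (card_filter_add_card_filter_not _).symm
      _ ≤ b + a * b := add_le_add hmin hrest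
      _ = (a + 1) * b := by ring

def tieBreak {α : Type*} (r : α → α → Prop) (x y : α) : Prop :=
  r x y ∧ (r y x → WellOrderingRel x y)

instance {α : Type*} (r : α → α → Prop) [IsTrans α r] : IsTrans α (tieBreak r) :=
  ⟨fun _ _ _ hxy hyz => ⟨trans_of r hxy.1 hyz.1, fun hzx =>
    trans_of WellOrderingRel (hxy.2 (trans_of r hyz.1 hzx)) (hyz.2 (trans_of r hzx hxy.1))⟩⟩

instance {α : Type*} (r : α → α → Prop) : Std.Irrefl (tieBreak r) :=
  ⟨fun x hx => irrefl_of WellOrderingRel x (hx.2 hx.1)⟩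

theorem tieBreak_or_tieBreak_iff {α : Type*} {r : α → α → Prop} {x y : α} (hxy : x ≠ y) :
    tieBreak r x y ∨ tieBreak r y x ↔ r x y ∨ r y x := by
  refine ⟨Or.imp And.left And.left, fun h => ?_⟩
  by_cases hx : r x y <;> by_cases hy : r y x
  · rcases trichotomous_of WellOrderingRel x y with hw | rfl | hw
    · exact Or.inl ⟨hx, fun _ => hw⟩
    · exact absurd rfl hxy
    · exact Or.inr ⟨hy, fun _ => hw⟩
  · exact Or.inl ⟨hx, fun h => absurd h hy⟩
  · exact Or.inr ⟨hy, fun h => absurd h hx⟩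
  · tauto

theorem Finset.card_le_mul_of_adj_iff {α : Type*} {r : α → α → Prop} [IsTrans α r]
    (G : SimpleGraph α) {S : Finset α}
    (hS : ∀ x ∈ S, ∀ y ∈ S, x ≠ y → (G.Adj x y ↔ r x y ∨ r y x)) {a b : ℕ}
    (ha : ∀ T ⊆ S, G.IsClique (T : Set α) → #T ≤ a)
    (hb : ∀ T ⊆ S, G.IsIndepSet (T : Set α) → #T ≤ b) : #S ≤ a * b := by
  refine card_le_mul_of_isChain_of_isAntichain (r := tieBreak r) S (fun T hT hc => ha T hT ?_)
    fun T hT hc => hb T hT ?_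
  · exact fun x hx y hy hxy =>
      (hS x (hT hx) y (hT hy) hxy).2 ((tieBreak_or_tieBreak_iff hxy).1 (hc hx hy hxy))
  · intro x hx y hy hxy hadj
    rcases (tieBreak_or_tieBreak_iff hxy).2 ((hS x (hT hx) y (hT hy) hxy).1 hadj) with h | h
    · exact hc hx hy hxy h
    · exact hc hy hx hxy.symm h

theorem Finset.strictMonoOn_card_filter_lt {α : Type*} [LinearOrder α] (s : Finset α) :
    StrictMonoOn (fun a => #{b ∈ s | b < a}) s := by
  intro a ha a' _ h
  refine card_lt_card ((ssubset_iff_of_subset fun b hb => ?_).2 ⟨a, ?_, ?_⟩)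
  · exact mem_filter.2 ⟨(mem_filter.1 hb).1, (mem_filter.1 hb).2.trans h⟩
  · exact mem_filter.2 ⟨ha, h⟩
  · simp

theorem Finset.card_filter_lt_lt_card {α : Type*} [LinearOrder α] {s : Finset α} {a : α}
    (ha : a ∈ s) : #{b ∈ s | b < a} < #s :=
  card_lt_card (filter_ssubset.2 ⟨a, ha, lt_irrefl a⟩)

namespace SimpleGraph

variable {V : Type*}

def RamseyBounded (G : SimpleGraph V) (a b B : ℕ) : Prop :=
  ∀ S : Finset V, (∀ T ⊆ S, G.IsClique (T : Set V) → #T ≤ a) →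
    (∀ T ⊆ S, G.IsIndepSet (T : Set V) → #T ≤ b) → #S ≤ B

/-- The independent sets of `H` are handled by the bound for `G`. -/
theorem RamseyBounded.sup {H G : SimpleGraph V} {a b B C : ℕ} (hH : H.RamseyBounded a B C)
    (hG : G.RamseyBounded a b B) : (H ⊔ G).RamseyBounded a b C := by
  intro S ha hb
  refine hH S (fun T hTS hT => ha T hTS (hT.mono le_sup_left)) fun T hTS hT => ?_
  refine hG T (fun W hWT hW => ha W (hWT.trans hTS) (hW.mono le_sup_right))
    fun W hWT hW => hb W (hWT.trans hTS) ?_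
  rintro x hx y hy hxy (h | h)
  · exact hT (hWT hx) (hWT hy) hxy h
  · exact hW hx hy hxy h

theorem ramseyBounded_biSup {ι : Type*} {g : ι → SimpleGraph V} {c : ℕ} (hc : 1 ≤ c)
    (hg : ∀ i a b, (g i).RamseyBounded a b (c * a * b)) (n : ℕ) (I : Finset ι) :
    (⨆ i ∈ I, g i).RamseyBounded n n ((c * n) ^ (#I + 1)) := by
  classical
  induction I using Finset.induction_on with
  | empty =>
    intro S _ hb
    have := hb S subset_rfl fun x _ y _ _ h => by simp at h
    simpa using this.trans (Nat.le_mul_of_pos_left n hc)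
  | insert i I hi ih =>
    rw [Finset.iSup_insert, card_insert_of_notMem hi, pow_succ']
    exact (hg i n _).sup ih

def dominanceGraph {ι α : Type*} [LT α] (lo hi : V → ι → α) : SimpleGraph V :=
  SimpleGraph.fromRel fun x y => ∀ j, lo x j < hi y j

/-- Vertices are classified by the dyadic keys of their coordinates; within a class, dominance
is a transitive relation between the vectors of midpoints. -/
theorem dominanceGraph_ramseyBounded {ι : Type*} [Fintype ι] {lo hi : V → ι → ℕ} {K : ℕ}
    (hlo : ∀ x j, lo x j < K) (hhi : ∀ x j, hi x j < K) (a b : ℕ) :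
    (dominanceGraph lo hi).RamseyBounded a b
      (((Nat.log 2 K + 1) * 2) ^ Fintype.card ι * a * b) := by
  classical
  intro S ha hb
  let key x j := dyadicKey (lo x j) (hi x j)
  let mid x j := dyadicMid (orientedInterval (lo x j) (hi x j))
  let keys := Fintype.piFinset fun _ : ι => range (Nat.log 2 K + 1) ×ˢ (univ : Finset Bool)
  have hkeys : ∀ x ∈ S, key x ∈ keys := fun x _ => by
    simpa [keys, Nat.lt_succ_iff] using fun j => dyadicKey_fst_le_log (hlo x j) (hhi x j)
  have hfiber : ∀ κ ∈ keys, #{x ∈ S | key x = κ} ≤ a * b := by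
    intro κ _
    let r x y := ∀ j, if (κ j).2 then mid x j ≤ mid y j else mid x j < mid y j
    have : IsTrans V r := ⟨fun x y z hxy hyz j => by
      have := hxy j; have := hyz j; split_ifs at * <;> omega⟩
    have hr : ∀ x ∈ {x ∈ S | key x = κ}, ∀ y ∈ {x ∈ S | key x = κ},
        (∀ j, lo x j < hi y j) ↔ r x y := by
      intro x hx y hy
      have hx := (mem_filter.1 hx).2
      have hy := (mem_filter.1 hy).2
      refine forall_congr' fun j => ?_
      rw [lt_iff_of_dyadicKey_eq (congrFun (hx.trans hy.symm) j)]
      simp only [← hx, key, mid]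
    refine card_le_mul_of_adj_iff (r := r) _ (fun x hx y hy hxy => ?_)
      (fun T hT => ha T (hT.trans (filter_subset _ _)))
      (fun T hT => hb T (hT.trans (filter_subset _ _)))
    rw [dominanceGraph, fromRel_adj, hr x hx y hy, hr y hy x hx]
    exact and_iff_right hxy
  calc #S ≤ a * b * #keys := card_le_mul_card_image_of_maps_to hkeys _ hfiber
    _ = ((Nat.log 2 K + 1) * 2) ^ Fintype.card ι * a * b := by simp [keys]; ring

theorem IsClique.card_lt_of_cliqueFree {G : SimpleGraph V} {n : ℕ}
    (hG : G.CliqueFree n) {T : Finset V} (hT : G.IsClique (T : Set V)) : #T < n := by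
  by_contra! h
  obtain ⟨T', hT'T, hcard⟩ := exists_subset_card_eq h
  exact hG T' ⟨hT.subset hT'T, hcard⟩

theorem dominanceGraph_comp_eq {ι α β : Type*} [LinearOrder α] [Preorder β] {f : α → β}
    {s : Set α} (hf : StrictMonoOn f s) {lo hi : V → ι → α} (hlo : ∀ x j, lo x j ∈ s)
    (hhi : ∀ x j, hi x j ∈ s) :
    dominanceGraph (fun x j => f (lo x j)) (fun x j => f (hi x j)) = dominanceGraph lo hi := by
  ext x y
  simp only [dominanceGraph, fromRel_adj, hf.lt_iff_lt (hlo _ _) (hhi _ _)]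

/-- Replacing every value by its rank among all values occurring. -/
theorem exists_iSup_dominanceGraph_nat_eq [Fintype V] {ι κ α : Type*} [Fintype ι] [Fintype κ]
    [LinearOrder α] (lo hi : ι → V → κ → α) :
    ∃ lo' hi' : ι → V → κ → ℕ,
      (∀ i x j, lo' i x j < 2 * Fintype.card (ι × V × κ) ∧
        hi' i x j < 2 * Fintype.card (ι × V × κ)) ∧
      ⨆ i, dominanceGraph (lo' i) (hi' i) = ⨆ i, dominanceGraph (lo i) (hi i) := by
  classical
  let Y := (univ.image fun p : ι × V × κ => lo p.1 p.2.1 p.2.2) ∪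
    univ.image fun p : ι × V × κ => hi p.1 p.2.1 p.2.2
  have hlo : ∀ i x j, lo i x j ∈ Y := fun i x j =>
    mem_union_left _ (mem_image_of_mem _ (mem_univ (i, x, j)))
  have hhi : ∀ i x j, hi i x j ∈ Y := fun i x j =>
    mem_union_right _ (mem_image_of_mem _ (mem_univ (i, x, j)))
  have hY : #Y ≤ 2 * Fintype.card (ι × V × κ) := by
    refine (card_union_le _ _).trans ?_
    rw [two_mul]
    exact add_le_add (card_image_le.trans (card_univ).le) (card_image_le.trans (card_univ).le)
  let rank a := #{b ∈ Y | b < a}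
  refine ⟨fun i x j => rank (lo i x j), fun i x j => rank (hi i x j), fun i x j =>
    ⟨(card_filter_lt_lt_card (hlo i x j)).trans_le hY,
      (card_filter_lt_lt_card (hhi i x j)).trans_le hY⟩, ?_⟩
  congr! 2 with i
  exact dominanceGraph_comp_eq (strictMonoOn_card_filter_lt Y) (hlo i) (hhi i)

end SimpleGraph

theorem IsSemilinearStar.exists_eq_iSup_dominanceGraph {V : Type} {G : SimpleGraph V} {t u : ℕ}
    (hG : IsSemilinearStar G t u) :
    ∃ lo hi : Fin u → V → Fin t → ℝ, G = ⨆ i, SimpleGraph.dominanceGraph (lo i) (hi i) := by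
  obtain ⟨d, -, v, -, f, hf, hadj⟩ := hG
  choose a b c hf using hf
  refine ⟨fun i x j => c i j + ∑ k, a i j k * v x k, fun i y j => -∑ k, b i j k * v y k, ?_⟩
  have hdom : ∀ x y, x ≠ y →
      (G.Adj x y ↔ ∃ i, ∀ j, c i j + ∑ k, a i j k * v x k < -∑ k, b i j k * v y k) := by
    intro x y hxy
    rw [hadj x y hxy]
    refine exists_congr fun i => forall_congr' fun j => ?_
    rw [hf]
    constructor <;> intro <;> linarith
  ext x y
  simp only [SimpleGraph.iSup_adj, SimpleGraph.dominanceGraph, SimpleGraph.fromRel_adj]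
  by_cases hxy : x = y
  · simp [hxy]
  · rw [← or_self (G.Adj x y)]
    nth_rw 2 [G.adj_comm]
    rw [hdom x y hxy, hdom y x (Ne.symm hxy)]
    simp only [hxy, ne_eq, not_false_eq_true, true_and, exists_or]

theorem IsSemilinearStar.card_le_of_cliqueFree {V : Type} [Fintype V] {G : SimpleGraph V}
    {t u n : ℕ} (hG : IsSemilinearStar G t u) (hcl : G.CliqueFree n) (hind : Gᶜ.CliqueFree n) :
    Fintype.card V ≤
      (((Nat.log 2 (2 * (u * t) * Fintype.card V) + 1) * 2) ^ t * n) ^ (u + 1) := by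
  obtain ⟨lo, hi, rfl⟩ := hG.exists_eq_iSup_dominanceGraph
  obtain ⟨lo, hi, hK, heq⟩ := SimpleGraph.exists_iSup_dominanceGraph_nat_eq lo hi
  rw [← heq] at hcl hind
  have hcard : 2 * Fintype.card (Fin u × V × Fin t) = 2 * (u * t) * Fintype.card V := by
    simp only [Fintype.card_prod, Fintype.card_fin]; ring
  rw [hcard] at hK
  have := SimpleGraph.ramseyBounded_biSup (Nat.one_le_pow _ _ (by positivity))
    (fun i => SimpleGraph.dominanceGraph_ramseyBounded (fun x j => (hK i x j).1)
      (fun x j => (hK i x j).2)) n univ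
  simp only [mem_univ, iSup_pos, card_univ, Fintype.card_fin] at this
  exact this univ (fun T _ hT => (hT.card_lt_of_cliqueFree hcl).le)
    fun T _ hT => (((SimpleGraph.isClique_compl _).2 hT).card_lt_of_cliqueFree hind).le

theorem exists_natLog_pow_le_mul_sqrt {D : ℕ} (hD : 0 < D) :
    ∃ C : ℝ, 0 < C ∧ ∀ k : ℕ, 0 < k → ((Nat.log 2 k + 1 : ℕ) : ℝ) ^ D ≤ C * √k := by
  set δ : ℝ := 1 / (2 * D)
  have hδ : 0 < δ := by positivity
  have hlog2 : 0 < Real.log 2 := Real.log_pos one_lt_two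
  refine ⟨(1 + 1 / (δ * Real.log 2)) ^ D, by positivity, fun k hk => ?_⟩
  have hk1 : (1 : ℝ) ≤ k := Nat.one_le_cast.2 hk
  have hkδ : 1 ≤ (k : ℝ) ^ δ := Real.one_le_rpow hk1 hδ.le
  have hlog : (Nat.log 2 k : ℝ) ≤ (k : ℝ) ^ δ / (δ * Real.log 2) := by
    calc (Nat.log 2 k : ℝ) ≤ Real.logb 2 k := by exact_mod_cast Real.natLog_le_logb k 2
      _ = Real.log k / Real.log 2 := rfl
      _ ≤ (k : ℝ) ^ δ / δ / Real.log 2 := by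
        gcongr; exact Real.log_natCast_le_rpow_div k hδ
      _ = (k : ℝ) ^ δ / (δ * Real.log 2) := by rw [div_div]
  have hsqrt : ((k : ℝ) ^ δ) ^ D = √k := by
    rw [← Real.rpow_natCast, ← Real.rpow_mul (Nat.cast_nonneg k), Real.sqrt_eq_rpow]
    congr 1
    simp only [δ]
    field_simp
  calc ((Nat.log 2 k + 1 : ℕ) : ℝ) ^ D ≤ ((1 + 1 / (δ * Real.log 2)) * (k : ℝ) ^ δ) ^ D := by
        push_cast
        gcongr
        rw [add_mul, one_mul, one_div_mul_eq_div]
        linarith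
    _ = (1 + 1 / (δ * Real.log 2)) ^ D * √k := by rw [mul_pow, hsqrt]

/-- Since `(log N) ^ D = O(√N)`, the hypothesis gives `N ≤ A' √N y`, i.e. `√N ≤ A' y`. -/
theorem exists_le_mul_sq_of_le_natLog_pow (m : ℕ) {D : ℕ} (hD : 0 < D) :
    ∃ A : ℝ, 0 < A ∧ ∀ (N : ℕ) (y : ℝ), 0 < N → 0 ≤ y →
      (N : ℝ) ≤ ((Nat.log 2 (m * N) + 1 : ℕ) : ℝ) ^ D * y → (N : ℝ) ≤ A * y ^ 2 := by
  obtain ⟨C, hC, hlog⟩ := exists_natLog_pow_le_mul_sqrt hD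
  refine ⟨C ^ 2 * (m + 1), by positivity, fun N y hN hy h => ?_⟩
  have hmN : Nat.log 2 (m * N) ≤ Nat.log 2 ((m + 1) * N) := Nat.log_mono_right (by nlinarith)
  have hlogN : ((Nat.log 2 (m * N) + 1 : ℕ) : ℝ) ^ D ≤ C * √(m + 1) * √N := by
    refine (pow_le_pow_left₀ (Nat.cast_nonneg _) (Nat.cast_le.2 (Nat.succ_le_succ hmN)) D).trans ?_
    have := hlog ((m + 1) * N) (by positivity)
    push_cast at this
    rw [Real.sqrt_mul (by positivity), ← mul_assoc] at this
    exact_mod_cast this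
  have hNpos : (0 : ℝ) < √N := Real.sqrt_pos.2 (by exact_mod_cast hN)
  have hsqrt : √N ≤ C * √(m + 1) * y := by
    refine le_of_mul_le_mul_right ?_ hNpos
    rw [Real.mul_self_sqrt (Nat.cast_nonneg N)]
    calc (N : ℝ) ≤ C * √(m + 1) * √N * y := h.trans (mul_le_mul_of_nonneg_right hlogN hy)
      _ = C * √(m + 1) * y * √N := by ring
  calc (N : ℝ) = √N ^ 2 := (Real.sq_sqrt (Nat.cast_nonneg N)).symm
    _ ≤ (C * √(m + 1) * y) ^ 2 := pow_le_pow_left₀ hNpos.le hsqrt 2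
    _ = C ^ 2 * (m + 1) * y ^ 2 := by rw [mul_pow, mul_pow, Real.sq_sqrt (by positivity)]

theorem stmt4_general (u : ℕ) :
    ∃ β : ℝ, 0 < β ∧ ∀ t : ℕ, 0 < t →
      ∃ α : ℝ, 0 < α ∧ ∀ n : ℕ, 0 < n →
        ∀ (V : Type) [Fintype V] (G : SimpleGraph V), IsSemilinearStar G t u →
          α * (n : ℝ) ^ β < (Fintype.card V : ℝ) →
          (∃ S : Finset V, G.IsNClique n S) ∨ (∃ S : Finset V, Gᶜ.IsNClique n S) := by
  refine ⟨(2 * (u + 1) : ℕ), by positivity, fun t ht => ?_⟩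
  obtain ⟨A, hA, habsorb⟩ := exists_le_mul_sq_of_le_natLog_pow (2 * (u * t)) (D := t * (u + 1))
    (by positivity)
  refine ⟨A * (2 ^ (t * (u + 1))) ^ 2, by positivity, fun n _ V _ G hG hcard => ?_⟩
  by_contra! hno
  have hN := hG.card_le_of_cliqueFree hno.1 hno.2
  have hNpos : 0 < Fintype.card V := Nat.cast_pos.1 ((by positivity : (0 : ℝ) ≤ _).trans_lt hcard)
  have hNle := habsorb _ (2 ^ (t * (u + 1)) * n ^ (u + 1)) hNpos (by positivity) <| by
    refine ((Nat.cast_le (α := ℝ)).2 hN).trans_eq ?_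
    simp only [mul_pow, ← pow_mul]
    push_cast
    ring
  rw [Real.rpow_natCast] at hcard
  linarith [show A * ((2 : ℝ) ^ (t * (u + 1)) * n ^ (u + 1)) ^ 2 =
    A * (2 ^ (t * (u + 1))) ^ 2 * n ^ (2 * (u + 1)) by ring]

/-- For all positive integers `t, u` there are constants `α = α(t,u) > 0` and `β = β(u) > 0`
(`β` depending only on `u`) such that every semilinear* graph of complexity `(t,u)` with more
than `α·n^β` vertices contains a clique or independent set of size `n`. -/
theorem stmt4 (u : ℕ) (hu : 0 < u) :
    ∃ β : ℝ, 0 < β ∧ ∀ t : ℕ, 0 < t →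
      ∃ α : ℝ, 0 < α ∧ ∀ n : ℕ, 0 < n →
        ∀ (V : Type) [Fintype V] (G : SimpleGraph V), IsSemilinearStar G t u →
          α * (n : ℝ) ^ β < (Fintype.card V : ℝ) →
          (∃ S : Finset V, G.IsNClique n S) ∨ (∃ S : Finset V, Gᶜ.IsNClique n S) :=
  stmt4_general u
end

section
/- For every positive integer t there exist positive integers t' and u, depending only on t, such that every semilinear graph of complexity t is semilinear* of complexity (t', u). -/
lemma linearPair_smul_add {d : ℕ} {f : (Fin d → ℝ) → (Fin d → ℝ) → ℝ}
    (hf : IsLinearPair f) (s c : ℝ) : IsLinearPair (fun x y => s * f x y + c) := by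
  obtain ⟨a, b, c0, h⟩ := hf
  refine ⟨fun i => s * a i, fun i => s * b i, s * c0 + c, fun x y => ?_⟩
  simp only [h, mul_assoc, ← Finset.mul_sum]
  ring

/-- Sign pattern as a triple of `Prop`s: `(f < 0, f ≤ 0, f = 0)`. -/
def signTriple : Fin 3 → Prop × Prop × Prop := fun c =>
  if c = 0 then (True, True, False)
  else if c = 1 then (False, True, True)
  else (False, False, False)

/-- For every positive integer `t` there are positive integers `t'` and `u`, depending only on
`t`, such that every semilinear graph of complexity `t` is semilinear* of complexity `(t', u)`. -/
theorem stmt7 (t : ℕ) (ht : 0 < t) :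
    ∃ t' u : ℕ, 0 < t' ∧ 0 < u ∧
      ∀ (V : Type) [Fintype V] (G : SimpleGraph V),
        IsSemilinear G t → IsSemilinearStar G t' u := by
  classical
  refine ⟨t * 2, 3 ^ t, by positivity, by positivity, ?_⟩
  intro V _ G hG
  obtain ⟨d, hd, v, hv, f, hlin, φ, hφ⟩ := hG
  -- Choose ε > 0 below every nonzero value |f i (v x) (v y)|.
  obtain ⟨ε, hε0, hεmin⟩ :
      ∃ ε : ℝ, 0 < ε ∧ ∀ x y (i : Fin t), f i (v x) (v y) ≠ 0 → ε ≤ |f i (v x) (v y)| := by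
    set S : Finset ℝ :=
      (Finset.univ.image (fun p : V × V × Fin t => |f p.2.2 (v p.1) (v p.2.1)|)).filter
        (fun r => 0 < r) with hS
    have hmem : ∀ x y (i : Fin t), f i (v x) (v y) ≠ 0 → |f i (v x) (v y)| ∈ S := by
      intro x y i hne
      exact Finset.mem_filter.2
        ⟨Finset.mem_image.2 ⟨⟨x, y, i⟩, Finset.mem_univ _, rfl⟩, abs_pos.2 hne⟩
    by_cases hne : S.Nonempty
    · exact ⟨S.min' hne, (Finset.mem_filter.1 (S.min'_mem hne)).2,
        fun x y i h => S.min'_le _ (hmem x y i h)⟩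
    · exact ⟨1, one_pos, fun x y i h => absurd ⟨_, hmem x y i h⟩ hne⟩
  -- Whether a sign pattern is accepted by φ.
  set Good : (Fin t → Fin 3) → Prop := fun σ => φ (fun i => signTriple (σ i)) with hGood
  set e1 : (Fin t → Fin 3) ≃ Fin (3 ^ t) := finFunctionFinEquiv
  set e2 : Fin t × Fin 2 ≃ Fin (t * 2) := finProdFinEquiv
  -- The new family of linear functions.
  set g0 : (Fin t → Fin 3) → Fin t → Fin 2 → (Fin d → ℝ) → (Fin d → ℝ) → ℝ :=
    fun σ i k =>
      if Good σ then
        if σ i = 0 then f i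
        else if σ i = 1 then
          (if k = 0 then fun x y => f i x y - ε else fun x y => -(f i x y) - ε)
        else fun x y => -(f i x y)
      else fun _ _ => 1 with hg0
  refine ⟨d, hd, v, hv,
    fun a j => g0 (e1.symm a) (e2.symm j).1 (e2.symm j).2, ?_, ?_⟩
  · -- linearity
    intro a j
    set σ := e1.symm a
    set i := (e2.symm j).1
    set k := (e2.symm j).2
    show IsLinearPair (g0 σ i k)
    have h1 : ∀ (i : Fin t), IsLinearPair (fun x y => f i x y - ε) := fun i => by
      have := linearPair_smul_add (hlin i) 1 (-ε)
      simpa [sub_eq_add_neg] using this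
    have h2 : ∀ (i : Fin t), IsLinearPair (fun x y => -(f i x y) - ε) := fun i => by
      have := linearPair_smul_add (hlin i) (-1) (-ε)
      simpa [sub_eq_add_neg] using this
    have h3 : ∀ (i : Fin t), IsLinearPair (fun x y => -(f i x y)) := fun i => by
      have := linearPair_smul_add (hlin i) (-1) 0
      simpa using this
    have h4 : IsLinearPair (fun (_ _ : Fin d → ℝ) => (1 : ℝ)) :=
      ⟨0, 0, 1, fun x y => by simp⟩
    simp only [hg0]
    split_ifs <;> first | exact hlin i | exact h1 i | exact h2 i | exact h3 i | exact h4
  · -- adjacency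
    intro x y hxy
    set F : Fin t → ℝ := fun i => f i (v x) (v y) with hF
    have h3c : ∀ c : Fin 3, c = 0 ∨ c = 1 ∨ c = 2 := by decide
    have key : ∀ (z : ℝ) (c : Fin 3),
        (c = 0 → z < 0) → (c = 1 → z = 0) → (c = 2 → 0 < z) →
        ((z < 0, z ≤ 0, z = 0) : Prop × Prop × Prop) = signTriple c := by
      intro z c h0 h1 h2
      rcases h3c c with h | h | h <;> subst h
      · have hz := h0 rfl
        simp [signTriple, Prod.ext_iff, eq_iff_iff, hz, hz.le, hz.ne]
      · have hz := h1 rfl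
        simp [signTriple, Prod.ext_iff, eq_iff_iff, hz]
      · have hz := h2 rfl
        simp [signTriple, Prod.ext_iff, eq_iff_iff, (asymm hz : ¬ z < 0),
          not_le.2 hz, hz.ne']
    -- actual sign pattern
    set s : Fin t → Fin 3 := fun i => if F i < 0 then 0 else if F i = 0 then 1 else 2 with hs
    have hs0 : ∀ i, s i = 0 → F i < 0 := by
      intro i h
      simp only [hs] at h
      split_ifs at h with h1 h2
      · exact h1
      · exact absurd h (by decide)
      · exact absurd h (by decide)
    have hs1 : ∀ i, s i = 1 → F i = 0 := by
      intro i h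
      simp only [hs] at h
      split_ifs at h with h1 h2
      · exact absurd h (by decide)
      · exact h2
      · exact absurd h (by decide)
    have hs2 : ∀ i, s i = 2 → 0 < F i := by
      intro i h
      simp only [hs] at h
      split_ifs at h with h1 h2
      · exact absurd h (by decide)
      · exact absurd h (by decide)
      · push_neg at h1
        exact lt_of_le_of_ne h1 (Ne.symm h2)
    have hsign : (fun i => (F i < 0, F i ≤ 0, F i = 0)) = fun i => signTriple (s i) :=
      funext fun i => key (F i) (s i) (hs0 i) (hs1 i) (hs2 i)
    have hAdj : G.Adj x y ↔ Good s := by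
      rw [hφ x y hxy]
      exact iff_of_eq (congrArg φ hsign)
    constructor
    · intro hadj
      refine ⟨e1 s, fun j => ?_⟩
      have hgs : Good s := hAdj.1 hadj
      simp only [Equiv.symm_apply_apply]
      set i := (e2.symm j).1
      set k := (e2.symm j).2
      show g0 s i k (v x) (v y) < 0
      simp only [hg0, if_pos hgs]
      split_ifs with hc0 hc1 hck
      · exact hs0 i hc0
      · show f i (v x) (v y) - ε < 0
        have hz' : f i (v x) (v y) = 0 := hs1 i hc1
        rw [hz']; linarith
      · show -(f i (v x) (v y)) - ε < 0
        have hz' : f i (v x) (v y) = 0 := hs1 i hc1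
        rw [hz']; linarith
      · show -(f i (v x) (v y)) < 0
        have h2 : s i = 2 := by
          rcases h3c (s i) with h | h | h
          · exact absurd h hc0
          · exact absurd h hc1
          · exact h
        have hz : 0 < f i (v x) (v y) := hs2 i h2
        linarith
    · rintro ⟨a, ha⟩
      set σ : Fin t → Fin 3 := e1.symm a with hσ
      have ha' : ∀ (i : Fin t) (k : Fin 2), g0 σ i k (v x) (v y) < 0 := by
        intro i k
        have := ha (e2 (i, k))
        simpa [Equiv.symm_apply_apply] using this
      have hgσ : Good σ := by
        by_contra hc
        have := ha' ⟨0, ht⟩ 0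
        simp only [hg0, if_neg hc] at this
        norm_num at this
      have hσ0 : ∀ i, σ i = 0 → F i < 0 := by
        intro i h
        have := ha' i 0
        simp only [hg0, if_pos hgσ, h, if_pos rfl] at this
        exact this
      have hσ1 : ∀ i, σ i = 1 → F i = 0 := by
        intro i h
        have h0 : ¬ (σ i = 0) := by rw [h]; decide
        have hk0 := ha' i 0
        have hk1 := ha' i 1
        simp only [hg0, if_pos hgσ, h0, if_false, h, if_pos rfl] at hk0 hk1
        have hk0' : F i - ε < 0 := hk0
        have hk1' : -(F i) - ε < 0 := hk1
        by_contra hc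
        have hmin : ε ≤ |F i| := hεmin x y i hc
        rcases abs_cases (F i) with ⟨he, _⟩ | ⟨he, _⟩ <;> rw [he] at hmin <;> linarith
      have hσ2 : ∀ i, σ i = 2 → 0 < F i := by
        intro i h
        have h0 : ¬ (σ i = 0) := by rw [h]; decide
        have h1 : ¬ (σ i = 1) := by rw [h]; decide
        have := ha' i 0
        simp only [hg0, if_pos hgσ, h0, if_false, h1, if_false] at this
        have : -(f i (v x) (v y)) < 0 := this
        have : -(F i) < 0 := this
        linarith
      have hmatch : (fun i => (F i < 0, F i ≤ 0, F i = 0)) = fun i => signTriple (σ i) :=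
        funext fun i => key (F i) (σ i) (hσ0 i) (hσ1 i) (hσ2 i)
      have hGoal : φ (fun i => signTriple (σ i)) := hgσ
      rw [hφ x y hxy]
      show φ (fun i => (F i < 0, F i ≤ 0, F i = 0))
      rw [hmatch]
      exact hGoal
end

section
/- For every positive integer d there exists a constant c > 0 such that the following holds: let G be the intersection graph of n ≥ 2 open axis-parallel boxes in ℝ^d, and let H be a comparability graph on the same vertex set V(G). If the graph G ∩ H (the graph on V(G) whose edge set is E(G) ∩ E(H)) contains no clique of size s, then χ(G ∩ H) ≤ c·s·(log n)^d. -/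
/-!
Replace the coordinates in direction `i` by their ranks among the `2n` box endpoints and store the
interval of a box at the node of the dyadic tree over these ranks where it lives: the point of
its rank interval with the largest `2`-adic valuation. There are at most `log₂ (2n) + 1` levels.
Two boxes that meet and lie on the same level in every direction lie at the same node in every
direction, and boxes sharing all their nodes pairwise meet. So on a class of boxes sharing a node
vector, `G ∩ H` is the comparability graph `H`, whose chains are cliques; colouring each box by its
vector of levels and its height in the order (fewer than `s - 1` values) is proper.
-/

/-- The open axis-parallel box in `ℝ^d` with lower corner `lo` and upper corner `hi`. -/
def boxSet {d : ℕ} (lo hi : Fin d → ℝ) : Set (Fin d → ℝ) :=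
  {x | ∀ i, lo i < x i ∧ x i < hi i}

open Finset

lemma exists_two_pow_succ_dvd_mem_Icc {j a b : ℕ} (hab : a < b) (ha : 2 ^ j ∣ a)
    (hb : 2 ^ j ∣ b) : ∃ c ∈ Icc a b, 2 ^ (j + 1) ∣ c := by
  obtain ⟨k, rfl⟩ := ha
  obtain ⟨l, rfl⟩ := hb
  have hkl : k < l := Nat.lt_of_mul_lt_mul_left hab
  rcases Nat.even_or_odd k with ⟨t, rfl⟩ | ⟨t, rfl⟩
  · exact ⟨2 ^ j * (t + t), left_mem_Icc.2 hab.le, ⟨t, by ring⟩⟩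
  · refine ⟨2 ^ j * (2 * t + 1 + 1), mem_Icc.2 ⟨by gcongr; omega, by gcongr; omega⟩,
      ⟨t + 1, by ring⟩⟩

/-- The element of `(p, q]` of largest `2`-adic valuation (`0` if `q ≤ p`). -/
noncomputable def dyadicNode (p q : ℕ) : ℕ :=
  if h : p < q then ((Ioc p q).exists_max_image (padicValNat 2) (nonempty_Ioc.2 h)).choose
  else 0

section DyadicNode

variable {p q p' q' m : ℕ}

lemma dyadicNode_mem_Ioc (h : p < q) : dyadicNode p q ∈ Ioc p q := by
  rw [dyadicNode, dif_pos h]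
  exact ((Ioc p q).exists_max_image (padicValNat 2) (nonempty_Ioc.2 h)).choose_spec.1

lemma padicValNat_le_dyadicNode (hm : m ∈ Ioc p q) :
    padicValNat 2 m ≤ padicValNat 2 (dyadicNode p q) := by
  have h : p < q := nonempty_Ioc.1 ⟨m, hm⟩
  rw [dyadicNode, dif_pos h]
  exact ((Ioc p q).exists_max_image (padicValNat 2) (nonempty_Ioc.2 h)).choose_spec.2 m hm

lemma dyadicNode_le (p q : ℕ) : dyadicNode p q ≤ q := by
  by_cases h : p < q
  · exact (mem_Ioc.1 (dyadicNode_mem_Ioc h)).2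
  · simp [dyadicNode, h]

lemma padicValNat_dyadicNode_le_log (p q : ℕ) : padicValNat 2 (dyadicNode p q) ≤ Nat.log 2 q :=
  (padicValNat_le_nat_log _).trans (Nat.log_mono_right (dyadicNode_le p q))

/-- Between two distinct numbers of valuation `j` lies one of larger valuation. -/
lemma dyadicNode_eq_of_padicValNat_eq (h : max p p' < min q q')
    (hv : padicValNat 2 (dyadicNode p q) = padicValNat 2 (dyadicNode p' q')) :
    dyadicNode p q = dyadicNode p' q' := by
  wlog hlt : dyadicNode p q < dyadicNode p' q' generalizing p q p' q'
  · rcases (not_lt.1 hlt).eq_or_lt with heq | hgt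
    · exact heq.symm
    · exact (this (by rwa [max_comm, min_comm]) hv.symm hgt).symm
  obtain ⟨hpq, hpq'⟩ : p < q ∧ p' < q' := by omega
  have hm := mem_Ioc.1 (dyadicNode_mem_Ioc hpq)
  have hm' := mem_Ioc.1 (dyadicNode_mem_Ioc hpq')
  obtain ⟨c, hc, hdvd⟩ := exists_two_pow_succ_dvd_mem_Icc hlt pow_padicValNat_dvd
    (by rw [hv]; exact pow_padicValNat_dvd)
  rw [mem_Icc] at hc
  have hjc : padicValNat 2 (dyadicNode p q) < padicValNat 2 c :=
    (padicValNat_dvd_iff_le (by omega)).1 hdvd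
  by_cases hcq : c ≤ q
  · have := padicValNat_le_dyadicNode (mem_Ioc.2 ⟨(show p < c by omega), hcq⟩)
    omega
  · have := padicValNat_le_dyadicNode (mem_Ioc.2 ⟨(show p' < c by omega), hc.2.trans hm'.2⟩)
    omega

end DyadicNode

def rankIn {α : Type*} [LinearOrder α] (T : Finset α) (x : α) : ℕ := #{t ∈ T | t < x}

/-- The node of the dyadic tree over the ranks of `T` at which the interval `(a, b)` is stored. -/
noncomputable def intervalNode {α : Type*} [LinearOrder α] (T : Finset α) (a b : α) : ℕ :=
  dyadicNode (rankIn T a) (rankIn T b)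

section Rank

variable {α : Type*} [LinearOrder α] {T : Finset α} {a b a' b' : α}

lemma rankIn_mono : Monotone (rankIn T) := fun _ _ hxy =>
  card_le_card (monotone_filter_right T fun _ _ ht => ht.trans_le hxy)

lemma rankIn_lt_rankIn (ha : a ∈ T) (hab : a < b) : rankIn T a < rankIn T b :=
  card_lt_card ⟨monotone_filter_right T fun _ _ ht => ht.trans hab,
    fun hsub => lt_irrefl a (mem_filter.1 (hsub (mem_filter.2 ⟨ha, hab⟩))).2⟩

lemma rankIn_le_card (x : α) : rankIn T x ≤ #T := card_filter_le _ _

lemma padicValNat_intervalNode_le : padicValNat 2 (intervalNode T a b) ≤ Nat.log 2 #T :=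
  (padicValNat_dyadicNode_le_log _ _).trans (Nat.log_mono_right (rankIn_le_card b))

lemma intervalNode_eq_of_padicValNat_eq (ha : a ∈ T) (ha' : a' ∈ T) (h : max a a' < min b b')
    (hv : padicValNat 2 (intervalNode T a b) = padicValNat 2 (intervalNode T a' b')) :
    intervalNode T a b = intervalNode T a' b' := by
  refine dyadicNode_eq_of_padicValNat_eq ?_ hv
  simp only [max_lt_iff, lt_min_iff] at h ⊢
  obtain ⟨⟨hab, ha'b⟩, hab', ha'b'⟩ := h
  exact ⟨⟨rankIn_lt_rankIn ha hab, rankIn_lt_rankIn ha' ha'b⟩,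
    rankIn_lt_rankIn ha hab', rankIn_lt_rankIn ha' ha'b'⟩

lemma lt_of_intervalNode_eq (ha : a ∈ T) (hab : a < b) (ha' : a' ∈ T) (hab' : a' < b')
    (h : intervalNode T a b = intervalNode T a' b') : a < b' := by
  have hm := mem_Ioc.1 (dyadicNode_mem_Ioc (rankIn_lt_rankIn ha hab))
  have hm' := mem_Ioc.1 (dyadicNode_mem_Ioc (rankIn_lt_rankIn ha' hab'))
  rw [← intervalNode, h, intervalNode] at hm
  by_contra! hba
  have := rankIn_mono (T := T) hba
  omega

lemma max_lt_min_of_intervalNode_eq (ha : a ∈ T) (hab : a < b) (ha' : a' ∈ T) (hab' : a' < b')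
    (h : intervalNode T a b = intervalNode T a' b') : max a a' < min b b' := by
  simp only [max_lt_iff, lt_min_iff]
  exact ⟨⟨hab, lt_of_intervalNode_eq ha' hab' ha hab h.symm⟩,
    lt_of_intervalNode_eq ha hab ha' hab' h, hab'⟩

end Rank

section Height

variable {α : Type*} [Preorder α] {Γ : SimpleGraph α} {s : ℕ}

lemma LTSeries.length_add_one_lt_of_cliqueFree (hΓ : ∀ a b : α, a < b → Γ.Adj a b)
    (hs : Γ.CliqueFree s) (p : LTSeries α) : p.length + 1 < s := by
  by_contra! hle
  have hcopy : (SimpleGraph.completeGraph (Fin (p.length + 1))).IsContained Γ :=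
    ⟨⟨⟨p, fun {i j} hij => (Ne.lt_or_gt hij).elim (fun h => hΓ _ _ (p.strictMono h))
      fun h => (hΓ _ _ (p.strictMono h)).symm⟩, p.strictMono.injective⟩⟩
  exact hcopy.not_cliqueFree (hs.mono hle)

lemma exists_strictMono_fin_of_cliqueFree (hΓ : ∀ a b : α, a < b → Γ.Adj a b)
    (hs : Γ.CliqueFree s) : ∃ f : α → Fin (s - 1), StrictMono f := by
  have hfin (a : α) : Order.height a ≠ ⊤ := by
    refine ((Order.height_le (n := s) fun p _ => ?_).trans_lt (ENat.natCast_lt_top s)).ne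
    exact_mod_cast (LTSeries.length_add_one_lt_of_cliqueFree hΓ hs p).le.trans' p.length.le_succ
  choose h hh using fun a => ENat.ne_top_iff_exists.1 (hfin a)
  have hlt (a : α) : h a < s - 1 := by
    obtain ⟨p, -, hp⟩ := Order.exists_series_of_height_eq_coe a (hh a).symm
    have := LTSeries.length_add_one_lt_of_cliqueFree hΓ hs p
    omega
  refine ⟨fun a => ⟨h a, hlt a⟩, fun a b hab => ?_⟩
  have := Order.height_strictMono hab ((hh a).symm ▸ ENat.natCast_lt_top _)
  rw [← hh, ← hh] at this
  exact_mod_cast this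

end Height

section Boxes

variable {d : ℕ}

lemma boxSet_inter_nonempty_iff {lo hi lo' hi' : Fin d → ℝ} :
    (boxSet lo hi ∩ boxSet lo' hi').Nonempty ↔ ∀ i, max (lo i) (lo' i) < min (hi i) (hi' i) := by
  refine ⟨fun ⟨x, hx, hx'⟩ i => (max_lt (hx i).1 (hx' i).1).trans (lt_min (hx i).2 (hx' i).2),
    fun h => ⟨fun i => (max (lo i) (lo' i) + min (hi i) (hi' i)) / 2, fun i => ?_, fun i => ?_⟩⟩ <;>
  · have := h i
    have := le_max_left (lo i) (lo' i)
    have := le_max_right (lo i) (lo' i)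
    have := min_le_left (hi i) (hi' i)
    have := min_le_right (hi i) (hi' i)
    constructor <;> linarith

lemma boxSet_nonempty_iff {lo hi : Fin d → ℝ} : (boxSet lo hi).Nonempty ↔ ∀ i, lo i < hi i := by
  simpa using boxSet_inter_nonempty_iff (lo := lo) (hi := hi) (lo' := lo) (hi' := hi)

variable {V : Type*} [Fintype V] (lo hi : V → Fin d → ℝ)

noncomputable def endpoints (i : Fin d) : Finset ℝ :=
  univ.image (lo · i) ∪ univ.image (hi · i)

noncomputable def boxNode (v : V) (i : Fin d) : ℕ :=
  intervalNode (endpoints lo hi i) (lo v i) (hi v i)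

lemma lo_mem_endpoints (v : V) (i : Fin d) : lo v i ∈ endpoints lo hi i := by
  simp [endpoints]

lemma card_endpoints_le (i : Fin d) : #(endpoints lo hi i) ≤ 2 * Fintype.card V :=
  (card_union_le _ _).trans (by
    rw [two_mul]
    exact add_le_add card_image_le card_image_le)

lemma padicValNat_boxNode_le (v : V) (i : Fin d) :
    padicValNat 2 (boxNode lo hi v i) ≤ Nat.log 2 (2 * Fintype.card V) :=
  padicValNat_intervalNode_le.trans (Nat.log_mono_right (card_endpoints_le lo hi i))

variable {lo hi} {v w : V}

lemma boxNode_eq_of_inter_nonempty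
    (h : (boxSet (lo v) (hi v) ∩ boxSet (lo w) (hi w)).Nonempty)
    (hv : ∀ i, padicValNat 2 (boxNode lo hi v i) = padicValNat 2 (boxNode lo hi w i)) :
    boxNode lo hi v = boxNode lo hi w :=
  funext fun i => intervalNode_eq_of_padicValNat_eq (lo_mem_endpoints lo hi v i)
    (lo_mem_endpoints lo hi w i) (boxSet_inter_nonempty_iff.1 h i) (hv i)

lemma inter_nonempty_of_boxNode_eq (hv : (boxSet (lo v) (hi v)).Nonempty)
    (hw : (boxSet (lo w) (hi w)).Nonempty) (h : boxNode lo hi v = boxNode lo hi w) :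
    (boxSet (lo v) (hi v) ∩ boxSet (lo w) (hi w)).Nonempty :=
  boxSet_inter_nonempty_iff.2 fun i => max_lt_min_of_intervalNode_eq (lo_mem_endpoints lo hi v i)
    (boxSet_nonempty_iff.1 hv i) (lo_mem_endpoints lo hi w i) (boxSet_nonempty_iff.1 hw i)
    (congrFun h i)

end Boxes

theorem colorable_inf_of_boxes {V : Type*} [Fintype V] {d : ℕ} (lo hi : V → Fin d → ℝ)
    {G H : SimpleGraph V}
    (hG : ∀ x y : V, G.Adj x y ↔
      x ≠ y ∧ (boxSet (lo x) (hi x) ∩ boxSet (lo y) (hi y)).Nonempty)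
    {r : V → V → Prop} (htrans : ∀ a b c : V, r a b → r b c → r a c) (hirr : ∀ a : V, ¬ r a a)
    (hH : ∀ x y : V, H.Adj x y ↔ x ≠ y ∧ (r x y ∨ r y x)) {s : ℕ} (hs : (G ⊓ H).CliqueFree s) :
    (G ⊓ H).Colorable ((Nat.log 2 (2 * Fintype.card V) + 1) ^ d * (s - 1)) := by
  -- Boxes with equal nodes meet, so chains of `R` are cliques of `G ⊓ H`.
  let R (u v : V) : Prop := (boxSet (lo u) (hi u)).Nonempty ∧ (boxSet (lo v) (hi v)).Nonempty ∧
    boxNode lo hi u = boxNode lo hi v ∧ r u v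
  let _ : PartialOrder V := @partialOrderOfSO V R
    { irrefl a h := hirr a h.2.2.2
      trans _ _ _ h h' := ⟨h.1, h'.2.1, h.2.2.1.trans h'.2.2.1, htrans _ _ _ h.2.2.2 h'.2.2.2⟩ }
  obtain ⟨height, hheight⟩ := exists_strictMono_fin_of_cliqueFree (Γ := G ⊓ H)
    (fun u v (⟨hu, hv, hnode, hr⟩ : R u v) =>
      have hne : u ≠ v := fun h => hirr u (h ▸ hr)
      ⟨(hG u v).2 ⟨hne, inter_nonempty_of_boxNode_eq hu hv hnode⟩, (hH u v).2 ⟨hne, .inl hr⟩⟩)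
    hs
  let level (v : V) (i : Fin d) : Fin (Nat.log 2 (2 * Fintype.card V) + 1) :=
    ⟨padicValNat 2 (boxNode lo hi v i), Nat.lt_succ_of_le (padicValNat_boxNode_le lo hi v i)⟩
  have hcol : (G ⊓ H).Coloring
      ((Fin d → Fin (Nat.log 2 (2 * Fintype.card V) + 1)) × Fin (s - 1)) :=
    SimpleGraph.Coloring.mk (fun v => (level v, height v)) fun {u v} ⟨hGuv, hHuv⟩ heq => by
      obtain ⟨hne, hinter⟩ := (hG u v).1 hGuv
      have hnode : boxNode lo hi u = boxNode lo hi v := boxNode_eq_of_inter_nonempty hinter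
        fun i => congrArg Fin.val (congrFun (congrArg Prod.fst heq) i)
      have hu := hinter.mono Set.inter_subset_left
      have hv := hinter.mono Set.inter_subset_right
      rcases ((hH u v).1 hHuv).2 with hr | hr
      · exact (hheight (show R u v from ⟨hu, hv, hnode, hr⟩)).ne (congrArg Prod.snd heq)
      · exact (hheight (show R v u from ⟨hv, hu, hnode.symm, hr⟩)).ne' (congrArg Prod.snd heq)
  simpa using hcol.colorable

lemma natLog_two_mul_add_one_le_logb {n : ℕ} (hn : 2 ≤ n) :
    (Nat.log 2 (2 * n) + 1 : ℝ) ≤ 3 * Real.logb 2 n := by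
  have hlog : Nat.log 2 (2 * n) = Nat.log 2 n + 1 := by
    rw [mul_comm, Nat.log_mul_base one_lt_two (by omega)]
  have hone : (1 : ℝ) ≤ Real.logb 2 n := by
    rw [← Real.logb_self_eq_one one_lt_two]
    exact Real.logb_le_logb_of_le one_lt_two two_pos (by exact_mod_cast hn)
  have := Real.natLog_le_logb n 2
  rw [Nat.cast_ofNat] at this
  push_cast [hlog]
  linarith

theorem stmt8_general (d : ℕ) :
    ∃ c : ℝ, 0 < c ∧
      ∀ (V : Type) [Fintype V] (n : ℕ), Fintype.card V = n → 2 ≤ n →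
        ∀ (lo hi : V → Fin d → ℝ) (G H : SimpleGraph V),
          (∀ x y : V, G.Adj x y ↔
            x ≠ y ∧ (boxSet (lo x) (hi x) ∩ boxSet (lo y) (hi y)).Nonempty) →
          (∃ r : V → V → Prop, (∀ a b c' : V, r a b → r b c' → r a c') ∧ (∀ a : V, ¬ r a a) ∧
            ∀ x y : V, H.Adj x y ↔ (x ≠ y ∧ (r x y ∨ r y x))) →
          ∀ s : ℕ, (G ⊓ H).CliqueFree s →
            ∃ m : ℕ, (G ⊓ H).chromaticNumber ≤ (m : ℕ∞) ∧
              (m : ℝ) ≤ c * (s : ℝ) * (Real.logb 2 n) ^ d := by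
  refine ⟨3 ^ d, by positivity, ?_⟩
  rintro V _ n rfl hn lo hi G H hG ⟨r, htrans, hirr, hH⟩ s hs
  refine ⟨_, (colorable_inf_of_boxes lo hi hG htrans hirr hH hs).chromaticNumber_le, ?_⟩
  calc (((Nat.log 2 (2 * Fintype.card V) + 1) ^ d * (s - 1) : ℕ) : ℝ)
      ≤ (Nat.log 2 (2 * Fintype.card V) + 1 : ℝ) ^ d * s := by
        push_cast
        gcongr
        exact_mod_cast Nat.sub_le s 1
    _ ≤ (3 * Real.logb 2 (Fintype.card V)) ^ d * s := by
        gcongr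
        exact natLog_two_mul_add_one_le_logb hn
    _ = 3 ^ d * s * Real.logb 2 (Fintype.card V) ^ d := by ring

/-- For every positive integer `d` there is a constant `c > 0` such that: if `G` is the
intersection graph of `n ≥ 2` open boxes in `ℝ^d` and `H` is a comparability graph on the same
vertex set, and `G ⊓ H` has no clique of size `s`, then `χ(G ⊓ H) ≤ c·s·(log₂ n)^d`. -/
theorem stmt8 (d : ℕ) (hd : 0 < d) :
    ∃ c : ℝ, 0 < c ∧
      ∀ (V : Type) [Fintype V] (n : ℕ), Fintype.card V = n → 2 ≤ n →
        ∀ (lo hi : V → Fin d → ℝ) (G H : SimpleGraph V),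
          (∀ x y : V, G.Adj x y ↔
            x ≠ y ∧ (boxSet (lo x) (hi x) ∩ boxSet (lo y) (hi y)).Nonempty) →
          (∃ r : V → V → Prop, (∀ a b c' : V, r a b → r b c' → r a c') ∧ (∀ a : V, ¬ r a a) ∧
            ∀ x y : V, H.Adj x y ↔ (x ≠ y ∧ (r x y ∨ r y x))) →
          ∀ s : ℕ, (G ⊓ H).CliqueFree s →
            ∃ m : ℕ, (G ⊓ H).chromaticNumber ≤ (m : ℕ∞) ∧
              (m : ℝ) ≤ c * (s : ℝ) * (Real.logb 2 n) ^ d :=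
  stmt8_general d
end

section
/- There exists a constant c > 0 (one may take c = 1/10) such that the following holds for every integer t ≥ 2. Let ω : 2^[t] → ℝ_{≥0} be a balanced weight function with ω(2^[t]) ≥ 9/10. Then either (i) ω({∅}) ≥ 1/10 and ω({[t]}) ≥ 1/10, or (ii) there exist a positive integer s and s pairwise disjoint families 𝒜_1,…,𝒜_s ⊂ 2^[t] such that Σ_{i=1}^s ω(𝒜_i)^c ≥ 1 and, for every 1 ≤ i < j ≤ s, every A ∈ 𝒜_i is incomparable (under inclusion) to every B ∈ 𝒜_j. -/
open Finset

namespace Stmt9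

noncomputable def mar : ℕ → ℝ := fun m => ∑ k ∈ Finset.Icc 2 m, (((k:ℝ))^10)⁻¹

lemma mar_two : mar 2 = ((2:ℝ)^10)⁻¹ := by simp [mar]

lemma mar_succ (m : ℕ) (hm : 2 ≤ m) : mar (m+1) = mar m + ((((m:ℝ)+1))^10)⁻¹ := by
  unfold mar
  rw [Finset.sum_Icc_succ_top (by omega : 2 ≤ m + 1)]
  push_cast
  ring

lemma mar_bound : ∀ m, 2 ≤ m → mar m ≤ 1/4 - 1/(4*(m:ℝ)) := by
  refine Nat.le_induction ?_ ?_
  · rw [mar_two]; norm_num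
  · intro m hm ih
    rw [mar_succ m hm]
    have hm' : (2:ℝ) ≤ (m:ℝ) := by exact_mod_cast hm
    have h1 : (0:ℝ) < (m:ℝ) := by linarith
    have h2 : (0:ℝ) < (m:ℝ)+1 := by linarith
    have e1 : ((m:ℝ)+1)^4 ≤ ((m:ℝ)+1)^10 :=
      pow_le_pow_right₀ (by linarith) (by norm_num)
    have e2 : 4*(m:ℝ)*((m:ℝ)+1) ≤ ((m:ℝ)+1)^4 := by
      nlinarith [sq_nonneg ((m:ℝ)-1), sq_nonneg ((m:ℝ)+1)]
    have h3 : (0:ℝ) < 4*(m:ℝ)*((m:ℝ)+1) := by positivity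
    have e3 : (((m:ℝ)+1)^10)⁻¹ ≤ (4*(m:ℝ)*((m:ℝ)+1))⁻¹ :=
      inv_anti₀ h3 (le_trans e2 e1)
    have e4 : (4*(m:ℝ)*((m:ℝ)+1))⁻¹ = 1/(4*(m:ℝ)) - 1/(4*((m:ℝ)+1)) := by
      field_simp
      ring
    push_cast
    linarith

lemma rpow_lower {x y : ℝ} (hy : 0 ≤ y) (h : y^(10:ℕ) ≤ x) : y ≤ x ^ ((1:ℝ)/10) := by
  have : y = (y^(10:ℕ)) ^ ((1:ℝ)/10) := by
    rw [← Real.rpow_natCast y 10, ← Real.rpow_mul hy]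
    norm_num
  rw [this]
  exact Real.rpow_le_rpow (pow_nonneg hy 10) h (by norm_num)

lemma sum_split {t : ℕ} (ω : Finset (Fin t) → ℝ)
    (P Q R : Finset (Fin t) → Prop) [DecidablePred P] [DecidablePred Q] [DecidablePred R]
    (h : ∀ A, P A ↔ Q A ∨ R A) (hx : ∀ A, ¬ (Q A ∧ R A)) :
    ∑ A ∈ univ.filter P, ω A = ∑ A ∈ univ.filter Q, ω A + ∑ A ∈ univ.filter R, ω A := by
  rw [← Finset.sum_union]
  · apply Finset.sum_congr _ (fun _ _ => rfl)
    ext A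
    simp only [mem_filter, mem_union, mem_univ, true_and]
    exact h A
  · rw [Finset.disjoint_left]
    intro A hA hA'
    simp only [mem_filter] at hA hA'
    exact hx A ⟨hA.2, hA'.2⟩

lemma exists_fam {t : ℕ} (ω : Finset (Fin t) → ℝ)
    (S : Finset (Fin t)) (hS : S.Nonempty) (T : Fin t → Finset (Fin t))
    (hinc : ∀ j ∈ S, ∀ j' ∈ S, j ≠ j' → ¬ T j ⊆ T j')
    (hlo : ∀ j ∈ S, ((S.card : ℝ))⁻¹ ≤
      (∑ A ∈ univ.filter (fun A => A ∩ S = T j), ω A) ^ ((1:ℝ)/10)) :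
    ∃ s : ℕ, 0 < s ∧ ∃ 𝒜 : Fin s → Finset (Finset (Fin t)),
      (∀ i j : Fin s, i ≠ j → Disjoint (𝒜 i) (𝒜 j)) ∧
      (1 : ℝ) ≤ ∑ i : Fin s, (∑ A ∈ 𝒜 i, ω A) ^ ((1:ℝ)/10) ∧
      (∀ i j : Fin s, i < j → ∀ A ∈ 𝒜 i, ∀ B ∈ 𝒜 j, ¬ A ⊆ B ∧ ¬ B ⊆ A) := by
  classical
  have hcard : 0 < S.card := card_pos.mpr hS
  set e := S.equivFin with he
  set jj : Fin S.card → Fin t := fun k => ((e.symm k : {x // x ∈ S}) : Fin t) with hjj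
  have hjmem : ∀ k, jj k ∈ S := fun k => (e.symm k).2
  have hjinj : ∀ {k k' : Fin S.card}, k ≠ k' → jj k ≠ jj k' := by
    intro k k' hkk h
    exact hkk (e.symm.injective (Subtype.ext h))
  refine ⟨S.card, hcard, fun k => univ.filter (fun A => A ∩ S = T (jj k)), ?_, ?_, ?_⟩
  · intro k k' hkk
    rw [Finset.disjoint_left]
    intro A hA hA'
    simp only [mem_filter, mem_univ, true_and] at hA hA'
    exact hinc (jj k) (hjmem k) (jj k') (hjmem k') (hjinj hkk)
      (by rw [← hA, ← hA'])
  · have h1 : ∀ k ∈ (univ : Finset (Fin S.card)), ((S.card : ℝ))⁻¹ ≤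
        (∑ A ∈ univ.filter (fun A => A ∩ S = T (jj k)), ω A) ^ ((1:ℝ)/10) :=
      fun k _ => hlo (jj k) (hjmem k)
    have h2 := Finset.card_nsmul_le_sum univ _ _ h1
    rw [Finset.card_univ, Fintype.card_fin, nsmul_eq_mul] at h2
    have h3 : (S.card : ℝ) * ((S.card : ℝ))⁻¹ = 1 := by
      rw [mul_inv_cancel₀]
      exact_mod_cast hcard.ne'
    linarith
  · intro k k' hkk A hA B hB
    simp only [mem_filter, mem_univ, true_and] at hA hB
    constructor
    · intro hsub
      exact hinc (jj k) (hjmem k) (jj k') (hjmem k') (hjinj hkk.ne)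
        (by rw [← hA, ← hB]; exact inter_subset_inter hsub (Subset.refl S))
    · intro hsub
      exact hinc (jj k') (hjmem k') (jj k) (hjmem k) (hjinj hkk.ne')
        (by rw [← hA, ← hB]; exact inter_subset_inter hsub (Subset.refl S))

variable {t : ℕ}

lemma trace_empty_iff (A S : Finset (Fin t)) (j : Fin t) :
    A ∩ S.erase j = ∅ ↔ A ∩ S = ∅ ∨ A ∩ S = {j} := by
  rw [Finset.inter_erase, Finset.erase_eq_empty_iff]

lemma trace_top_iff (A S : Finset (Fin t)) (j : Fin t) (hj : j ∈ S) :
    S.erase j ⊆ A ↔ S ⊆ A ∨ A ∩ S = S.erase j := by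
  constructor
  · intro h
    by_cases hjA : j ∈ A
    · left
      intro x hxS
      rcases eq_or_ne x j with rfl | hne
      · exact hjA
      · exact h (mem_erase.mpr ⟨hne, hxS⟩)
    · right
      ext x
      simp only [mem_inter, mem_erase]
      constructor
      · rintro ⟨hxA, hxS⟩
        exact ⟨fun hxj => hjA (hxj ▸ hxA), hxS⟩
      · rintro ⟨hne, hxS⟩
        exact ⟨h (mem_erase.mpr ⟨hne, hxS⟩), hxS⟩
  · rintro (h | h)
    · exact (Finset.erase_subset j S).trans h
    · rw [← h]; exact Finset.inter_subset_left

lemma pair_mem_iff (A : Finset (Fin t)) (i j : Fin t) (hij : i ≠ j) :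
    i ∈ A ↔ ({i, j} : Finset (Fin t)) ⊆ A ∨ A ∩ {i, j} = {i} := by
  constructor
  · intro hi
    by_cases hjA : j ∈ A
    · left
      simp [Finset.insert_subset_iff, hi, hjA]
    · right
      ext x
      simp only [mem_inter, mem_insert, mem_singleton]
      constructor
      · rintro ⟨hxA, (rfl | rfl)⟩
        · rfl
        · exact absurd hxA hjA
      · rintro rfl
        exact ⟨hi, Or.inl rfl⟩
  · rintro (h | h)
    · exact h (mem_insert_self i {j})
    · have : i ∈ A ∩ ({i, j} : Finset (Fin t)) := by
        rw [h]; exact mem_singleton_self i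
      exact (mem_inter.mp this).1

lemma pair_notmem_iff (A : Finset (Fin t)) (i j : Fin t) (hij : i ≠ j) :
    j ∉ A ↔ A ∩ ({i, j} : Finset (Fin t)) = ∅ ∨ A ∩ {i, j} = {i} := by
  constructor
  · intro hj
    by_cases hiA : i ∈ A
    · right
      ext x
      simp only [mem_inter, mem_insert, mem_singleton]
      constructor
      · rintro ⟨hxA, (rfl | rfl)⟩
        · rfl
        · exact absurd hxA hj
      · rintro rfl
        exact ⟨hiA, Or.inl rfl⟩
    · left
      ext x
      simp only [mem_inter, mem_insert, mem_singleton, notMem_empty, iff_false, not_and]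
      rintro hxA (rfl | rfl)
      · exact hiA hxA
      · exact hj hxA
  · rintro (h | h) hjA
    · have : j ∈ A ∩ ({i, j} : Finset (Fin t)) := mem_inter.mpr ⟨hjA, by simp⟩
      rw [h] at this
      exact notMem_empty j this
    · have : j ∈ A ∩ ({i, j} : Finset (Fin t)) := mem_inter.mpr ⟨hjA, by simp⟩
      rw [h, mem_singleton] at this
      exact hij this.symm

end Stmt9

open Stmt9

/-- There is a constant `c > 0` (one may take `c = 1/10`) such that for every `t ≥ 2` and every
balanced weight function `ω : 2^[t] → ℝ≥0` with total weight at least `9/10`, either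
`ω(∅), ω([t]) ≥ 1/10`, or there are pairwise disjoint families `𝒜_1, …, 𝒜_s` of subsets of `[t]`,
pairwise incomparable across families, with `∑ ω(𝒜_i)^c ≥ 1`. -/
theorem stmt9 :
    ∃ c : ℝ, 0 < c ∧
      ∀ t : ℕ, 2 ≤ t →
        ∀ ω : Finset (Fin t) → ℝ,
          (∀ A, 0 ≤ ω A) →
          (∀ i : Fin t, ∑ A ∈ Finset.univ.filter (fun A : Finset (Fin t) => i ∉ A), ω A ≤ 1/2) →
          (∀ i : Fin t, ∑ A ∈ Finset.univ.filter (fun A : Finset (Fin t) => i ∈ A), ω A ≤ 1/2) →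
          (9/10 : ℝ) ≤ ∑ A : Finset (Fin t), ω A →
          ((1/10 : ℝ) ≤ ω ∅ ∧ (1/10 : ℝ) ≤ ω Finset.univ) ∨
          (∃ s : ℕ, 0 < s ∧ ∃ 𝒜 : Fin s → Finset (Finset (Fin t)),
            (∀ i j : Fin s, i ≠ j → Disjoint (𝒜 i) (𝒜 j)) ∧
            (1 : ℝ) ≤ ∑ i : Fin s, (∑ A ∈ 𝒜 i, ω A) ^ c ∧
            (∀ i j : Fin s, i < j → ∀ A ∈ 𝒜 i, ∀ B ∈ 𝒜 j, ¬ A ⊆ B ∧ ¬ B ⊆ A)) := by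
  refine ⟨(1:ℝ)/10, by norm_num, ?_⟩
  intro t ht ω h0 hmi hpl hW
  by_cases hP2 : ∃ s : ℕ, 0 < s ∧ ∃ 𝒜 : Fin s → Finset (Finset (Fin t)),
      (∀ i j : Fin s, i ≠ j → Disjoint (𝒜 i) (𝒜 j)) ∧
      (1 : ℝ) ≤ ∑ i : Fin s, (∑ A ∈ 𝒜 i, ω A) ^ ((1:ℝ)/10) ∧
      (∀ i j : Fin s, i < j → ∀ A ∈ 𝒜 i, ∀ B ∈ 𝒜 j, ¬ A ⊆ B ∧ ¬ B ⊆ A)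
  · exact Or.inr hP2
  · left
    set W := ∑ A : Finset (Fin t), ω A with hWdef
    have hpq : ∀ i : Fin t,
        (∑ A ∈ univ.filter (fun A : Finset (Fin t) => i ∈ A), ω A)
        + (∑ A ∈ univ.filter (fun A : Finset (Fin t) => i ∉ A), ω A) = W :=
      fun i => Finset.sum_filter_add_sum_filter_not univ _ ω
    have hplow : ∀ i : Fin t,
        W - 1/2 ≤ ∑ A ∈ univ.filter (fun A : Finset (Fin t) => i ∈ A), ω A :=
      fun i => by linarith [hpq i, hmi i]
    have hqlow : ∀ i : Fin t,
        W - 1/2 ≤ ∑ A ∈ univ.filter (fun A : Finset (Fin t) => i ∉ A), ω A :=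
      fun i => by linarith [hpq i, hpl i]
    -- base case helper
    have half : ∀ i j : Fin t, i ≠ j →
        (∑ A ∈ univ.filter (fun A : Finset (Fin t) => A ∩ ({i,j}:Finset (Fin t)) = {i}), ω A)
          < ((2:ℝ)^10)⁻¹ →
        (W - 1/2 - mar 2 ≤
          ∑ A ∈ univ.filter (fun A : Finset (Fin t) => A ∩ ({i,j}:Finset (Fin t)) = ∅), ω A) ∧
        (W - 1/2 - mar 2 ≤
          ∑ A ∈ univ.filter (fun A : Finset (Fin t) => ({i,j}:Finset (Fin t)) ⊆ A), ω A) := by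
      intro i j hij hu
      have hsplit1 : (∑ A ∈ univ.filter (fun A : Finset (Fin t) => i ∈ A), ω A)
          = (∑ A ∈ univ.filter (fun A : Finset (Fin t) => ({i,j}:Finset (Fin t)) ⊆ A), ω A)
          + ∑ A ∈ univ.filter (fun A : Finset (Fin t) => A ∩ ({i,j}:Finset (Fin t)) = {i}), ω A := by
        refine sum_split ω _ _ _ (fun A => pair_mem_iff A i j hij) ?_
        rintro A ⟨h1, h2⟩
        have : j ∈ A ∩ ({i,j}:Finset (Fin t)) :=
          mem_inter.mpr ⟨h1 (by simp), by simp⟩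
        rw [h2, mem_singleton] at this
        exact hij this.symm
      have hsplit2 : (∑ A ∈ univ.filter (fun A : Finset (Fin t) => j ∉ A), ω A)
          = (∑ A ∈ univ.filter (fun A : Finset (Fin t) => A ∩ ({i,j}:Finset (Fin t)) = ∅), ω A)
          + ∑ A ∈ univ.filter (fun A : Finset (Fin t) => A ∩ ({i,j}:Finset (Fin t)) = {i}), ω A := by
        refine sum_split ω _ _ _ (fun A => pair_notmem_iff A i j hij) ?_
        rintro A ⟨h1, h2⟩
        rw [h1] at h2
        exact (singleton_ne_empty i) h2.symm
      rw [mar_two] at *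
      constructor
      · linarith [hqlow j, hsplit2]
      · linarith [hplow i, hsplit1]
    -- main induction on trace sets
    have key : ∀ m : ℕ, 2 ≤ m → ∀ S : Finset (Fin t), S.card = m →
        (W - 1/2 - mar m ≤
          ∑ A ∈ univ.filter (fun A : Finset (Fin t) => A ∩ S = ∅), ω A) ∧
        (W - 1/2 - mar m ≤
          ∑ A ∈ univ.filter (fun A : Finset (Fin t) => S ⊆ A), ω A) := by
      refine Nat.le_induction ?_ ?_
      · intro S hS
        obtain ⟨i, j, hij, rfl⟩ := Finset.card_eq_two.mp hS
        by_cases hu : (∑ A ∈ univ.filter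
            (fun A : Finset (Fin t) => A ∩ ({i,j}:Finset (Fin t)) = {i}), ω A) < ((2:ℝ)^10)⁻¹
        · exact half i j hij hu
        by_cases hv : (∑ A ∈ univ.filter
            (fun A : Finset (Fin t) => A ∩ ({i,j}:Finset (Fin t)) = {j}), ω A) < ((2:ℝ)^10)⁻¹
        · have hres := half j i hij.symm (by rw [pair_comm j i]; exact hv)
          rw [pair_comm i j]
          exact hres
        · exfalso
          apply hP2
          rw [not_lt] at hu hv
          have h2 : ({i,j}:Finset (Fin t)).card = 2 := card_pair hij
          refine exists_fam ω {i,j} ⟨i, by simp⟩ (fun k => ({k} : Finset (Fin t))) ?_ ?_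
          · intro a _ b _ hab hsub
            exact hab (by simpa using hsub)
          · intro k hk
            rw [h2]
            have hlow : ((2:ℝ)^10)⁻¹ ≤ ∑ A ∈ univ.filter
                (fun A : Finset (Fin t) => A ∩ ({i,j}:Finset (Fin t)) = ({k}:Finset (Fin t))), ω A := by
              rcases mem_insert.mp hk with rfl | hk'
              · exact hu
              · rw [mem_singleton] at hk'
                subst hk'
                exact hv
            apply rpow_lower (by norm_num)
            calc ((2:ℕ):ℝ)⁻¹ ^ (10:ℕ) = ((2:ℝ)^10)⁻¹ := by norm_num
            _ ≤ _ := hlow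
      · intro m hm IH S hS
        have hSpos : S.Nonempty := by
          rw [← card_pos, hS]; omega
        constructor
        · by_contra hcon
          rw [not_le] at hcon
          apply hP2
          refine exists_fam ω S hSpos (fun k => ({k} : Finset (Fin t))) ?_ ?_
          · intro a _ b _ hab hsub
            exact hab (by simpa using hsub)
          · intro j hj
            have hcard' : (S.erase j).card = m := by
              rw [card_erase_of_mem hj, hS]; omega
            have hIH := (IH (S.erase j) hcard').1
            have hsplit : (∑ A ∈ univ.filter (fun A : Finset (Fin t) => A ∩ S.erase j = ∅), ω A)
                = (∑ A ∈ univ.filter (fun A : Finset (Fin t) => A ∩ S = ∅), ω A)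
                + ∑ A ∈ univ.filter
                    (fun A : Finset (Fin t) => A ∩ S = ({j}:Finset (Fin t))), ω A := by
              refine sum_split ω _ _ _ (fun A => trace_empty_iff A S j) ?_
              rintro A ⟨h1, h2⟩
              rw [h1] at h2
              exact (singleton_ne_empty j) h2.symm
            have hmar := mar_succ m hm
            have htr : ((((m:ℝ)+1))^10)⁻¹ ≤ ∑ A ∈ univ.filter
                (fun A : Finset (Fin t) => A ∩ S = ({j}:Finset (Fin t))), ω A := by
              linarith [hIH, hcon, hsplit, hmar]
            rw [hS]
            apply rpow_lower (by positivity)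
            calc (((m+1:ℕ)):ℝ)⁻¹ ^ (10:ℕ) = ((((m:ℝ)+1))^10)⁻¹ := by
                  rw [inv_pow]; push_cast; ring_nf
            _ ≤ _ := htr
        · by_contra hcon
          rw [not_le] at hcon
          apply hP2
          refine exists_fam ω S hSpos (fun k => S.erase k) ?_ ?_
          · intro a _ b hb hab hsub
            have hbmem : b ∈ S.erase a := mem_erase.mpr ⟨hab.symm, hb⟩
            exact (mem_erase.mp (hsub hbmem)).1 rfl
          · intro j hj
            have hcard' : (S.erase j).card = m := by
              rw [card_erase_of_mem hj, hS]; omega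
            have hIH := (IH (S.erase j) hcard').2
            have hsplit : (∑ A ∈ univ.filter (fun A : Finset (Fin t) => S.erase j ⊆ A), ω A)
                = (∑ A ∈ univ.filter (fun A : Finset (Fin t) => S ⊆ A), ω A)
                + ∑ A ∈ univ.filter
                    (fun A : Finset (Fin t) => A ∩ S = S.erase j), ω A := by
              refine sum_split ω _ _ _ (fun A => trace_top_iff A S j hj) ?_
              rintro A ⟨h1, h2⟩
              have : j ∈ A ∩ S := mem_inter.mpr ⟨h1 hj, hj⟩
              rw [h2] at this
              exact (mem_erase.mp this).1 rfl
            have hmar := mar_succ m hm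
            have htr : ((((m:ℝ)+1))^10)⁻¹ ≤ ∑ A ∈ univ.filter
                (fun A : Finset (Fin t) => A ∩ S = S.erase j), ω A := by
              linarith [hIH, hcon, hsplit, hmar]
            rw [hS]
            apply rpow_lower (by positivity)
            calc (((m+1:ℕ)):ℝ)⁻¹ ^ (10:ℕ) = ((((m:ℝ)+1))^10)⁻¹ := by
                  rw [inv_pow]; push_cast; ring_nf
            _ ≤ _ := htr
    -- conclude with S = univ
    have hcardu : (univ : Finset (Fin t)).card = t := by simp
    have hk := key t ht univ hcardu
    have he : univ.filter (fun A : Finset (Fin t) => A ∩ univ = ∅) = {∅} := by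
      ext A; simp
    have hg : univ.filter (fun A : Finset (Fin t) => univ ⊆ A) = {(univ : Finset (Fin t))} := by
      ext A; simp [Finset.univ_subset_iff]
    rw [he, hg, sum_singleton, sum_singleton] at hk
    have hmb := mar_bound t ht
    have htpos : (0:ℝ) < (t:ℝ) := by
      have : 0 < t := by omega
      exact_mod_cast this
    have hfr : (0:ℝ) < 1/(4*(t:ℝ)) := by positivity
    exact ⟨by linarith [hk.1], by linarith [hk.2]⟩
end

section
/- Let G = (A, B; E) be a bipartite graph which is (isomorphic to) the incidence graph of a finite set of points and a finite set of open axis-parallel rectangles in ℝ², and let k be a positive integer. Then the graph G ⊗ k is also isomorphic to the incidence graph of a finite set of points and a finite set of open axis-parallel rectangles in ℝ². -/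
/-- The point `p` lies in the open axis-parallel rectangle `R`. -/
def InRect (p : ℝ × ℝ) (R : (ℝ × ℝ) × (ℝ × ℝ)) : Prop :=
  R.1.1 < p.1 ∧ p.1 < R.2.1 ∧ R.1.2 < p.2 ∧ p.2 < R.2.2

/-- The bipartite graph given by `E : A → B → Prop` is (isomorphic to) the incidence graph of a
finite set of points and a finite set of open axis-parallel rectangles in the plane. -/
def IsPointRectIncidence {A B : Type} (E : A → B → Prop) : Prop :=
  ∃ (p : A → ℝ × ℝ) (r : B → (ℝ × ℝ) × (ℝ × ℝ)),
    Function.Injective p ∧ Function.Injective r ∧ ∀ a b, E a b ↔ InRect (p a) (r b)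

/-- The bipartite adjacency relation of the graph `G ⊗ k`: its vertex classes are `A × [k]` and
`(B × [k]) ⊕ A`; `(u,i)` is joined to `(v,j)` iff `i = j` and `{u,v} ∈ E(G)`, and `(u,i)` is
joined to the copy of `a ∈ A` iff `u = a`. -/
def tensorE {A B : Type} (E : A → B → Prop) (k : ℕ) :
    A × Fin k → (B × Fin k) ⊕ A → Prop :=
  fun p w =>
    match w with
    | Sum.inl q => p.2 = q.2 ∧ E p.1 q.1
    | Sum.inr a => p.1 = a

/-- Normalizing map `ℝ → (0,1)`. -/
noncomputable def nf (x : ℝ) : ℝ := 1/2 + Real.arctan x / 4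

lemma nf_strictMono : StrictMono nf := fun x y h => by
  unfold nf
  have := Real.arctan_strictMono h
  linarith

lemma nf_inj : Function.Injective nf := nf_strictMono.injective

lemma nf_lt_iff {x y : ℝ} : nf x < nf y ↔ x < y := nf_strictMono.lt_iff_lt

lemma nf_mem (x : ℝ) : 0 < nf x ∧ nf x < 1 := by
  have h1 := Real.arctan_lt_pi_div_two x
  have h2 := Real.neg_pi_div_two_lt_arctan x
  have h3 : Real.pi < 3.15 := Real.pi_lt_d2
  have h4 : 0 < Real.pi := Real.pi_pos
  constructor <;> (unfold nf; nlinarith)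

/-- There is a positive lower bound for all positive elements of a finite set of reals. -/
lemma exists_pos_lb (s : Finset ℝ) : ∃ δ : ℝ, 0 < δ ∧ δ ≤ 1 ∧ ∀ x ∈ s, 0 < x → δ ≤ x := by
  classical
  set t : Finset ℝ := insert 1 (s.filter (fun x => 0 < x)) with ht
  have htne : t.Nonempty := ⟨1, Finset.mem_insert_self _ _⟩
  have hall : ∀ x ∈ t, 0 < x := by
    intro x hx
    rw [ht] at hx
    rcases Finset.mem_insert.1 hx with h | h
    · rw [h]; norm_num
    · exact (Finset.mem_filter.1 h).2
  refine ⟨t.min' htne, hall _ (t.min'_mem htne), ?_, ?_⟩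
  · exact Finset.min'_le _ _ (Finset.mem_insert_self _ _)
  · intro x hx hxpos
    exact Finset.min'_le _ _ (Finset.mem_insert_of_mem (Finset.mem_filter.2 ⟨hx, hxpos⟩))

/-- One can pick a positive real below `δ` avoiding a finite set. -/
lemma exists_avoid {δ : ℝ} (hδ : 0 < δ) (F : Finset ℝ) :
    ∃ ε : ℝ, 0 < ε ∧ ε < δ ∧ ε ∉ F := by
  obtain ⟨ε, hε⟩ := ((Set.Ioo_infinite hδ).diff F.finite_toSet).nonempty
  exact ⟨ε, hε.1.1, hε.1.2, fun hc => hε.2 (by exact_mod_cast hc)⟩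

/-- If the bipartite graph `G = (A,B;E)` is an incidence graph of points and open rectangles in
the plane, then so is `G ⊗ k`. -/
theorem stmt12 {A B : Type} [Fintype A] [Fintype B] (E : A → B → Prop) (k : ℕ) (hk : 0 < k)
    (h : IsPointRectIncidence E) : IsPointRectIncidence (tensorE E k) := by
  classical
  obtain ⟨p, r, hp, hr, hE⟩ := h
  -- normalized coordinates, all in (0,1)
  set X : A → ℝ := fun a => nf (p a).1 with hX
  set Y0 : A → ℝ := fun a => nf (p a).2 with hY0
  set L : B → ℝ := fun b => nf (r b).1.1 with hL
  set Bo : B → ℝ := fun b => nf (r b).1.2 with hBo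
  set Rt : B → ℝ := fun b => nf (r b).2.1 with hRt
  set T : B → ℝ := fun b => nf (r b).2.2 with hT
  have hX01 : ∀ a, 0 < X a ∧ X a < 1 := fun a => nf_mem _
  have hY01 : ∀ a, 0 < Y0 a ∧ Y0 a < 1 := fun a => nf_mem _
  have hL01 : ∀ b, 0 < L b ∧ L b < 1 := fun b => nf_mem _
  have hRt01 : ∀ b, 0 < Rt b ∧ Rt b < 1 := fun b => nf_mem _
  have hE' : ∀ a b, E a b ↔ (L b < X a ∧ X a < Rt b ∧ Bo b < Y0 a ∧ Y0 a < T b) := by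
    intro a b
    rw [hE a b]
    unfold InRect
    simp only [hX, hY0, hL, hBo, hRt, hT, nf_lt_iff]
  have hp' : ∀ a a', X a = X a' → Y0 a = Y0 a' → a = a' := by
    intro a a' h1 h2
    exact hp (Prod.ext (nf_inj h1) (nf_inj h2))
  -- δ : lower bound on vertical gaps
  obtain ⟨δ, hδpos, hδ1, hδ⟩ := exists_pos_lb
    (((Finset.univ : Finset (A × B)).image (fun q => Y0 q.1 - Bo q.2)) ∪
     ((Finset.univ : Finset (A × B)).image (fun q => T q.2 - Y0 q.1)))
  have hδB : ∀ a b, Bo b < Y0 a → δ ≤ Y0 a - Bo b := by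
    intro a b hlt
    exact hδ _ (Finset.mem_union_left _ (Finset.mem_image.2 ⟨(a, b), Finset.mem_univ _, rfl⟩))
      (by linarith)
  have hδT : ∀ a b, Y0 a < T b → δ ≤ T b - Y0 a := by
    intro a b hlt
    exact hδ _ (Finset.mem_union_right _ (Finset.mem_image.2 ⟨(a, b), Finset.mem_univ _, rfl⟩))
      (by linarith)
  -- ε : tiny shear parameter avoiding bad slopes
  obtain ⟨ε, hεpos, hεδ, hεF⟩ := exists_avoid hδpos
    ((Finset.univ : Finset (A × A)).image (fun q => (Y0 q.2 - Y0 q.1) / (X q.1 - X q.2)))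
  set Y : A → ℝ := fun a => Y0 a + ε * X a with hY
  have Ydef : ∀ a, Y a = Y0 a + ε * X a := fun a => rfl
  have hYinj : Function.Injective Y := by
    intro a a' hYa
    by_cases hXa : X a = X a'
    · exact hp' a a' hXa (by simp only [hY, hXa] at hYa; linarith)
    · exfalso
      apply hεF
      apply Finset.mem_image.2 ⟨(a, a'), Finset.mem_univ _, ?_⟩
      have hne : X a - X a' ≠ 0 := sub_ne_zero.2 hXa
      field_simp
      simp only [hY] at hYa
      linarith
  -- η : half minimal gap between distinct Y values
  obtain ⟨η0, hη0pos, _, hη0⟩ := exists_pos_lb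
    ((Finset.univ : Finset (A × A)).image (fun q => |Y q.1 - Y q.2|))
  set η : ℝ := η0 / 2 with hη
  have hηpos : 0 < η := by positivity
  have hηgap : ∀ a a', a ≠ a' → 2 * η ≤ |Y a - Y a'| := by
    intro a a' hne
    have habs : 0 < |Y a - Y a'| := abs_pos.2 (sub_ne_zero.2 (fun hc => hne (hYinj hc)))
    have := hη0 _ (Finset.mem_image.2 ⟨(a, a'), Finset.mem_univ _, rfl⟩) habs
    rw [hη]; linarith
  -- the new points and rectangles
  refine ⟨fun q => (X q.1 + 2 * q.2.val, Y q.1),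
    fun w => match w with
      | Sum.inl q => ((L q.1 + 2 * q.2.val, Bo q.1 + ε), (Rt q.1 + 2 * q.2.val, T q.1))
      | Sum.inr a => ((X a - 1/2, Y a - η), (X a + 2 * k - 3/2, Y a + η)),
    ?_, ?_, ?_⟩
  · -- injectivity of points
    rintro ⟨a, i⟩ ⟨a', i'⟩ heq
    have h1 : X a + 2 * i.val = X a' + 2 * i'.val := congrArg Prod.fst heq
    have h2 : Y a = Y a' := congrArg Prod.snd heq
    have ha : a = a' := hYinj h2
    subst ha
    have : (i.val : ℝ) = i'.val := by linarith
    have : i.val = i'.val := by exact_mod_cast this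
    exact Prod.ext rfl (Fin.ext this)
  · -- injectivity of rectangles
    rintro (⟨b, j⟩ | a) (⟨b', j'⟩ | a') heq
    · simp only [Prod.mk.injEq] at heq
      obtain ⟨⟨e1, e2⟩, e3, e4⟩ := heq
      have hj : j.val = j'.val := by
        by_contra hc
        rcases Nat.lt_or_ge j.val j'.val with hlt | hge
        · have : (j.val : ℝ) + 1 ≤ j'.val := by exact_mod_cast hlt
          have := (hL01 b).2; have := (hL01 b').1; linarith
        · have hlt : j'.val < j.val := lt_of_le_of_ne hge (fun hc2 => hc hc2.symm)
          have : (j'.val : ℝ) + 1 ≤ j.val := by exact_mod_cast hlt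
          have := (hL01 b').2; have := (hL01 b).1; linarith
      have hjr : (j.val : ℝ) = j'.val := by exact_mod_cast hj
      have hb : b = b' := by
        apply hr
        have c1 : (r b).1.1 = (r b').1.1 := nf_inj (by simp only [hL] at e1; linarith)
        have c2 : (r b).1.2 = (r b').1.2 := nf_inj (by simp only [hBo] at e2; linarith)
        have c3 : (r b).2.1 = (r b').2.1 := nf_inj (by simp only [hRt] at e3; linarith)
        have c4 : (r b).2.2 = (r b').2.2 := nf_inj (by simp only [hT] at e4; linarith)
        exact Prod.ext (Prod.ext c1 c2) (Prod.ext c3 c4)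
      rw [hb, Fin.ext hj]
    · exfalso
      simp only [Prod.mk.injEq] at heq
      obtain ⟨⟨e1, _⟩, e3, _⟩ := heq
      have := (hL01 b).1; have := (hRt01 b).2
      have hk1 : (1 : ℝ) ≤ k := by exact_mod_cast hk
      linarith
    · exfalso
      simp only [Prod.mk.injEq] at heq
      obtain ⟨⟨e1, _⟩, e3, _⟩ := heq
      have := (hL01 b').1; have := (hRt01 b').2
      have hk1 : (1 : ℝ) ≤ k := by exact_mod_cast hk
      linarith
    · simp only [Prod.mk.injEq] at heq
      obtain ⟨⟨_, e2⟩, _, _⟩ := heq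
      have : Y a = Y a' := by linarith
      rw [hYinj this]
  · -- incidence equivalence
    rintro ⟨a, i⟩ (⟨b, j⟩ | a')
    · show (i = j ∧ E a b) ↔ _
      unfold InRect
      simp only
      rw [hE' a b]
      constructor
      · rintro ⟨hij, h1, h2, h3, h4⟩
        subst hij
        refine ⟨by linarith, by linarith, ?_, ?_⟩
        · have := hδB a b h3
          linarith [Ydef a, mul_pos hεpos (hX01 a).1]
        · have := hδT a b h4
          linarith [Ydef a, mul_lt_of_lt_one_right hεpos (hX01 a).2]
      · rintro ⟨h1, h2, h3, h4⟩
        have hij : i.val = j.val := by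
          by_contra hc
          rcases Nat.lt_or_ge i.val j.val with hlt | hge
          · have : (i.val : ℝ) + 1 ≤ j.val := by exact_mod_cast hlt
            have := (hX01 a).2; have := (hL01 b).1; linarith
          · have hlt : j.val < i.val := lt_of_le_of_ne hge (fun hc2 => hc hc2.symm)
            have : (j.val : ℝ) + 1 ≤ i.val := by exact_mod_cast hlt
            have := (hX01 a).1; have := (hRt01 b).2; linarith
        have hijr : (i.val : ℝ) = j.val := by exact_mod_cast hij
        refine ⟨Fin.ext hij, by linarith, by linarith, ?_, ?_⟩
        · -- Bo b < Y0 a from Bo b + ε < Y0 a + ε * X a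
          by_contra hc
          push_neg at hc
          linarith [Ydef a, mul_lt_of_lt_one_right hεpos (hX01 a).2]
        · linarith [Ydef a, mul_pos hεpos (hX01 a).1]
    · show (a = a') ↔ _
      unfold InRect
      simp only
      constructor
      · rintro rfl
        have hi0 : (0 : ℝ) ≤ i.val := by positivity
        have hik : (i.val : ℝ) ≤ k - 1 := by
          have := i.isLt
          have : (i.val : ℝ) + 1 ≤ k := by exact_mod_cast this
          linarith
        exact ⟨by linarith, by linarith, by linarith, by linarith⟩
      · rintro ⟨_, _, h3, h4⟩
        by_contra hc
        have hgap := hηgap a a' hc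
        rcases abs_cases (Y a - Y a') with ⟨he, _⟩ | ⟨he, _⟩ <;> rw [he] at hgap <;> linarith
end

section
/- Let G be a semilinear* graph of complexity (t, u). Then there exist graphs G_1, …, G_u on the vertex set V(G), each isomorphic to a quasi-comparability graph of complexity t, such that G = G_1 ∪ ⋯ ∪ G_u (i.e., E(G) = E(G_1) ∪ ⋯ ∪ E(G_u)). -/
/-- The coordinate-wise strict partial order on `ℝ^t`. -/
def PrecLT {t : ℕ} (x y : Fin t → ℝ) : Prop := ∀ i, x i < y i

/-- `G` is (isomorphic to) a quasi-comparability graph of complexity `t`. -/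
def IsQuasiComp {V : Type} (G : SimpleGraph V) (t : ℕ) : Prop :=
  ∃ v : V → (Fin t → ℝ) × (Fin t → ℝ), Function.Injective v ∧
    ∀ x y : V, x ≠ y →
      (G.Adj x y ↔ PrecLT (v x).1 (v y).2 ∨ PrecLT (v y).1 (v x).2)


/-!
A linear function `f(x, y) = c + a·x + b·y` splits as `A x - B y`, so `f(x, y) < 0` reads
`A x < B y`. Hence the `i`-th conjunction of the defining formula says `P_i(x) ≺ Q_i(y)`, and its
symmetrisation is a quasi-comparability graph, except that `x ↦ (P_i x, Q_i x)` need not be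
injective. Adding `ε g(x)` to every coordinate of `P_i(x)`, for an injection `g : V → ℕ` and a
small generic `ε > 0`, makes it injective without changing any of the finitely many strict
inequalities `P_i(x) ≺ Q_i(y)`.
-/

open Filter Topology Function

lemma IsLinearPair.exists_eq_sub {d : ℕ} {f : (Fin d → ℝ) → (Fin d → ℝ) → ℝ}
    (hf : IsLinearPair f) : ∃ A B : (Fin d → ℝ) → ℝ, ∀ x y, f x y = A x - B y := by
  obtain ⟨a, b, c, hf⟩ := hf
  exact ⟨fun x => c + ∑ i, a i * x i, fun y => -∑ i, b i * y i, fun x y => by rw [hf]; ring⟩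

lemma IsSemilinearStar.exists_precLT {V : Type} {G : SimpleGraph V} {t u : ℕ}
    (h : IsSemilinearStar G t u) :
    ∃ P Q : Fin u → V → Fin t → ℝ,
      ∀ x y, x ≠ y → (G.Adj x y ↔ ∃ i, PrecLT (P i x) (Q i y)) := by
  obtain ⟨d, -, v, -, f, hlin, hadj⟩ := h
  choose A B hAB using fun i j => (hlin i j).exists_eq_sub
  refine ⟨fun i x j => A i j (v x), fun i y j => B i j (v y), fun x y hxy => ?_⟩
  simp only [hadj x y hxy, hAB, sub_neg, PrecLT]

lemma eventually_injective_add_mul {V : Type*} [Finite V] (L g : V → ℝ) (hg : Injective g) :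
    ∀ᶠ ε in 𝓝[≠] (0 : ℝ), Injective fun x => L x + ε * g x := by
  have hne : ∀ᶠ ε in 𝓝[≠] (0 : ℝ), ∀ x y, x ≠ y → ε ≠ (L y - L x) / (g x - g y) :=
    eventually_all.2 fun x => eventually_all.2 fun y =>
      (le_cofinite_iff_eventually_ne.1 (nhdsNE_le_cofinite 0) _).mono fun _ h _ => h
  refine hne.mono fun ε hε x y heq => by_contra fun hxy => hε x y hxy ?_
  rw [eq_div_iff (sub_ne_zero.2 (hg.ne hxy))]
  linarith

lemma exists_injective_precLT_iff {V : Type*} [Finite V] {t : ℕ} (ht : 0 < t)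
    (P Q : V → Fin t → ℝ) :
    ∃ w : V → (Fin t → ℝ) × (Fin t → ℝ),
      Injective w ∧ ∀ x y, PrecLT (w x).1 (w y).2 ↔ PrecLT (P x) (Q y) := by
  obtain ⟨g, hg⟩ := exists_injective_nat V
  have hinj := (eventually_injective_add_mul (fun x => P x ⟨0, ht⟩) (fun x => (g x : ℝ))
    (Nat.cast_injective.comp hg)).filter_mono (nhdsGT_le_nhdsNE 0)
  have hmargin : ∀ᶠ ε in 𝓝[>] (0 : ℝ), ∀ x y j, P x j < Q y j → P x j + ε * g x < Q y j := by
    refine eventually_all.2 fun x => eventually_all.2 fun y => eventually_all.2 fun j => ?_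
    refine eventually_imp_distrib_left.2 fun hlt => ?_
    have hlim : Tendsto (fun ε : ℝ => P x j + ε * g x) (𝓝[>] 0) (𝓝 (P x j)) := by
      refine tendsto_nhdsWithin_of_tendsto_nhds ?_
      simpa using ((continuous_id.mul continuous_const).const_add (P x j)).tendsto' (0 : ℝ) _ rfl
    exact hlim.eventually_lt_const hlt
  have hpos : ∀ᶠ ε in 𝓝[>] (0 : ℝ), 0 < ε := self_mem_nhdsWithin
  obtain ⟨ε, hε, hεinj, hεmargin⟩ := (hpos.and (hinj.and hmargin)).exists
  refine ⟨fun x => (fun j => P x j + ε * g x, Q x),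
    fun x y hxy => hεinj (congrArg (fun w => w.1 ⟨0, ht⟩) hxy),
    fun x y => ⟨fun h j => ?_, fun h j => hεmargin x y j (h j)⟩⟩
  have : 0 ≤ ε * g x := mul_nonneg hε.le (Nat.cast_nonneg _)
  linarith [h j]

lemma isQuasiComp_fromRel {V : Type} [Finite V] {t : ℕ} (ht : 0 < t) (P Q : V → Fin t → ℝ) :
    IsQuasiComp (SimpleGraph.fromRel fun x y => PrecLT (P x) (Q y)) t := by
  obtain ⟨w, hw, hwPQ⟩ := exists_injective_precLT_iff ht P Q
  exact ⟨w, hw, fun x y hxy => by simp only [SimpleGraph.fromRel_adj, ne_eq, hxy,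
    not_false_eq_true, true_and, hwPQ]⟩

theorem stmt16_general {V : Type} [Fintype V] (G : SimpleGraph V) (t u : ℕ) (ht : 0 < t)
    (h : IsSemilinearStar G t u) :
    ∃ Gs : Fin u → SimpleGraph V,
      (∀ i, IsQuasiComp (Gs i) t) ∧ ∀ x y : V, G.Adj x y ↔ ∃ i, (Gs i).Adj x y := by
  obtain ⟨P, Q, hPQ⟩ := h.exists_precLT
  refine ⟨fun i => SimpleGraph.fromRel fun x y => PrecLT (P i x) (Q i y),
    fun i => isQuasiComp_fromRel ht _ _, fun x y => ?_⟩
  rcases eq_or_ne x y with rfl | hxy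
  · simp
  calc G.Adj x y ↔ G.Adj x y ∨ G.Adj y x := by rw [G.adj_comm y x, or_self]
    _ ↔ ∃ i, PrecLT (P i x) (Q i y) ∨ PrecLT (P i y) (Q i x) := by
      rw [hPQ x y hxy, hPQ y x hxy.symm, exists_or]
    _ ↔ _ := by simp only [SimpleGraph.fromRel_adj, ne_eq, hxy, not_false_eq_true, true_and]

/-- Every semilinear* graph of complexity `(t,u)` is the union of `u` graphs, each isomorphic to
a quasi-comparability graph of complexity `t`. -/
theorem stmt16 {V : Type} [Fintype V] (G : SimpleGraph V) (t u : ℕ) (ht : 0 < t) (hu : 0 < u)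
    (h : IsSemilinearStar G t u) :
    ∃ Gs : Fin u → SimpleGraph V,
      (∀ i, IsQuasiComp (Gs i) t) ∧ ∀ x y : V, G.Adj x y ↔ ∃ i, (Gs i).Adj x y :=
  stmt16_general G t u ht h
end

section
/- Every graph that is the incidence graph of a finite set of points and a finite set of open axis-parallel rectangles in ℝ² is isomorphic to the intersection graph of a finite family of open axis-parallel boxes in ℝ³. -/
/-- The bipartite graph on `A ⊕ B` determined by the relation `E : A → B → Prop`. -/
def bipGraph {A B : Type} (E : A → B → Prop) : SimpleGraph (A ⊕ B) :=
  SimpleGraph.fromRel (fun x y => ∃ a b, x = Sum.inl a ∧ y = Sum.inr b ∧ E a b)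

lemma forall_fin3 {P : Fin 3 → Prop} : (∀ k, P k) ↔ P 0 ∧ P 1 ∧ P 2 := by
  constructor
  · exact fun h => ⟨h 0, h 1, h 2⟩
  · rintro ⟨h0, h1, h2⟩ k; fin_cases k <;> assumption

lemma mem_boxSet3 (lo hi x : Fin 3 → ℝ) :
    x ∈ boxSet lo hi ↔ (lo 0 < x 0 ∧ x 0 < hi 0) ∧ (lo 1 < x 1 ∧ x 1 < hi 1) ∧
      (lo 2 < x 2 ∧ x 2 < hi 2) := by
  simp [boxSet, forall_fin3]

/-- Every incidence graph of a finite set of points and a finite set of open axis-parallel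
rectangles in the plane is isomorphic to the intersection graph of a finite family of open
axis-parallel boxes in `ℝ³`. -/
theorem stmt18 (m n : ℕ) (p : Fin m → ℝ × ℝ) (r : Fin n → (ℝ × ℝ) × (ℝ × ℝ))
    (hp : Function.Injective p) (hr : Function.Injective r) :
    ∃ B : Fin m ⊕ Fin n → Set (Fin 3 → ℝ),
      (∀ v, ∃ lo hi : Fin 3 → ℝ, (∀ i, lo i < hi i) ∧ B v = boxSet lo hi) ∧
      Function.Injective B ∧
      (∀ v w : Fin m ⊕ Fin n,
        (bipGraph (fun i j => InRect (p i) (r j))).Adj v w ↔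
          v ≠ w ∧ (B v ∩ B w).Nonempty) := by
  classical
  obtain ⟨c, hc, hA, hBx, hBy⟩ : ∃ c : ℝ, 0 < c ∧
      (∀ i j, InRect (p i) (r j) →
        c ≤ (p i).1 - (r j).1.1 ∧ c ≤ (r j).2.1 - (p i).1 ∧
        c ≤ (p i).2 - (r j).1.2 ∧ c ≤ (r j).2.2 - (p i).2) ∧
      (∀ i i', (p i).1 ≠ (p i').1 → c ≤ |(p i).1 - (p i').1|) ∧
      (∀ i i', (p i).2 ≠ (p i').2 → c ≤ |(p i).2 - (p i').2|) := by
    set g : Fin m × Fin n → ℝ := fun ij =>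
      min (min ((p ij.1).1 - (r ij.2).1.1) ((r ij.2).2.1 - (p ij.1).1))
          (min ((p ij.1).2 - (r ij.2).1.2) ((r ij.2).2.2 - (p ij.1).2)) with hg
    set F : Finset ℝ :=
      (insert 1 ((Finset.univ.image g)
        ∪ (Finset.univ.image fun ii' : Fin m × Fin m => |(p ii'.1).1 - (p ii'.2).1|)
        ∪ (Finset.univ.image fun ii' : Fin m × Fin m => |(p ii'.1).2 - (p ii'.2).2|))).filter
        (fun x => 0 < x) with hF
    have h1 : (1:ℝ) ∈ F := by simp [hF]
    have hne : F.Nonempty := ⟨1, h1⟩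
    have hmem : ∀ x ∈ F, 0 < x := fun x hx => (Finset.mem_filter.1 hx).2
    refine ⟨F.min' hne, hmem _ (F.min'_mem hne), ?_, ?_, ?_⟩
    · intro i j hij
      obtain ⟨h1', h2', h3', h4'⟩ := hij
      have hgpos : 0 < g (i, j) := by
        simp only [hg, lt_min_iff]
        refine ⟨⟨by linarith, by linarith⟩, by linarith, by linarith⟩
      have hgmem : g (i, j) ∈ F := by
        refine Finset.mem_filter.2 ⟨Finset.mem_insert_of_mem ?_, hgpos⟩
        exact Finset.mem_union_left _ (Finset.mem_union_left _
          (Finset.mem_image.2 ⟨(i, j), Finset.mem_univ _, rfl⟩))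
      have hle := F.min'_le _ hgmem
      simp only [hg] at hle
      exact ⟨le_trans hle (le_trans (min_le_left _ _) (min_le_left _ _)),
        le_trans hle (le_trans (min_le_left _ _) (min_le_right _ _)),
        le_trans hle (le_trans (min_le_right _ _) (min_le_left _ _)),
        le_trans hle (le_trans (min_le_right _ _) (min_le_right _ _))⟩
    · intro i i' hne'
      have hpos : 0 < |(p i).1 - (p i').1| := abs_pos.2 (sub_ne_zero.2 hne')
      have hmem' : |(p i).1 - (p i').1| ∈ F := by
        refine Finset.mem_filter.2 ⟨Finset.mem_insert_of_mem ?_, hpos⟩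
        exact Finset.mem_union_left _ (Finset.mem_union_right _
          (Finset.mem_image.2 ⟨(i, i'), Finset.mem_univ _, rfl⟩))
      exact F.min'_le _ hmem'
    · intro i i' hne'
      have hpos : 0 < |(p i).2 - (p i').2| := abs_pos.2 (sub_ne_zero.2 hne')
      have hmem' : |(p i).2 - (p i').2| ∈ F := by
        refine Finset.mem_filter.2 ⟨Finset.mem_insert_of_mem ?_, hpos⟩
        exact Finset.mem_union_right _
          (Finset.mem_image.2 ⟨(i, i'), Finset.mem_univ _, rfl⟩)
      exact F.min'_le _ hmem'
  set e := c / 2 with he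
  have he' : c = 2 * e := by rw [he]; ring
  have he0 : 0 < e := by rw [he]; linarith
  set M1 : ℝ := 1 + c + ∑ i, |(p i).1| with hM1def
  set M2 : ℝ := 1 + c + ∑ i, |(p i).2| with hM2def
  have hM1 : ∀ i, (p i).1 + e < M1 := by
    intro i
    have h1 : |(p i).1| ≤ ∑ i, |(p i).1| :=
      Finset.single_le_sum (f := fun i => |(p i).1|) (fun j _ => abs_nonneg _) (Finset.mem_univ i)
    have h2 := le_abs_self (p i).1
    rw [hM1def]; linarith
  have hM2 : ∀ i, (p i).2 + e < M2 := by
    intro i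
    have h1 : |(p i).2| ≤ ∑ i, |(p i).2| :=
      Finset.single_le_sum (f := fun i => |(p i).2|) (fun j _ => abs_nonneg _) (Finset.mem_univ i)
    have h2 := le_abs_self (p i).2
    rw [hM2def]; linarith
  set lo : Fin m ⊕ Fin n → Fin 3 → ℝ := fun v =>
    Sum.elim
      (fun i => ![(p i).1 - e, (p i).2 - e, -1])
      (fun j => ![if (r j).1.1 + e < (r j).2.1 - e then (r j).1.1 + e else M1,
                  if (r j).1.2 + e < (r j).2.2 - e then (r j).1.2 + e else M2,
                  (j.val : ℝ)]) v with hlo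
  set hi : Fin m ⊕ Fin n → Fin 3 → ℝ := fun v =>
    Sum.elim
      (fun i => ![(p i).1 + e, (p i).2 + e, (n : ℝ) + 1])
      (fun j => ![if (r j).1.1 + e < (r j).2.1 - e then (r j).2.1 - e else M1 + 1,
                  if (r j).1.2 + e < (r j).2.2 - e then (r j).2.2 - e else M2 + 1,
                  (j.val : ℝ) + 1]) v with hhi
  have memP : ∀ i (x : Fin 3 → ℝ), x ∈ boxSet (lo (Sum.inl i)) (hi (Sum.inl i)) ↔
      ((p i).1 - e < x 0 ∧ x 0 < (p i).1 + e) ∧ ((p i).2 - e < x 1 ∧ x 1 < (p i).2 + e) ∧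
      (-1 < x 2 ∧ x 2 < (n : ℝ) + 1) := by
    intro i x
    rw [hlo, hhi]
    simp [mem_boxSet3]
  have memR : ∀ j (x : Fin 3 → ℝ), x ∈ boxSet (lo (Sum.inr j)) (hi (Sum.inr j)) ↔
      ((if (r j).1.1 + e < (r j).2.1 - e then (r j).1.1 + e else M1) < x 0 ∧
        x 0 < (if (r j).1.1 + e < (r j).2.1 - e then (r j).2.1 - e else M1 + 1)) ∧
      ((if (r j).1.2 + e < (r j).2.2 - e then (r j).1.2 + e else M2) < x 1 ∧
        x 1 < (if (r j).1.2 + e < (r j).2.2 - e then (r j).2.2 - e else M2 + 1)) ∧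
      ((j.val : ℝ) < x 2 ∧ x 2 < (j.val : ℝ) + 1) := by
    intro j x
    rw [hlo, hhi]
    simp [mem_boxSet3]
  have hlohi : ∀ v k, lo v k < hi v k := by
    intro v k
    cases v with
    | inl i =>
      rw [hlo, hhi]
      have hn0 : (0:ℝ) ≤ (n:ℝ) := Nat.cast_nonneg _
      fin_cases k <;> simp <;> linarith
    | inr j =>
      rw [hlo, hhi]
      fin_cases k <;> simp
      · split_ifs with h
        · exact h
        · linarith
      · split_ifs with h
        · exact h
        · linarith
  have K1 : ∀ i j, (boxSet (lo (Sum.inl i)) (hi (Sum.inl i)) ∩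
      boxSet (lo (Sum.inr j)) (hi (Sum.inr j))).Nonempty ↔ InRect (p i) (r j) := by
    intro i j
    constructor
    · rintro ⟨x, hxP, hxR⟩
      rw [memP] at hxP
      rw [memR] at hxR
      obtain ⟨⟨hP1, hP2⟩, ⟨hP3, hP4⟩, -⟩ := hxP
      obtain ⟨⟨hR1, hR2⟩, ⟨hR3, hR4⟩, -⟩ := hxR
      have hx0 := hM1 i
      have hy0 := hM2 i
      by_cases hcx : (r j).1.1 + e < (r j).2.1 - e
      · by_cases hcy : (r j).1.2 + e < (r j).2.2 - e
        · rw [if_pos hcx] at hR1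
          rw [if_pos hcx] at hR2
          rw [if_pos hcy] at hR3
          rw [if_pos hcy] at hR4
          exact ⟨by linarith, by linarith, by linarith, by linarith⟩
        · rw [if_neg hcy] at hR3
          exact absurd hR3 (by linarith)
      · rw [if_neg hcx] at hR1
        exact absurd hR1 (by linarith)
    · intro hij
      obtain ⟨s1, s2, s3, s4⟩ := hA i j hij
      obtain ⟨h1', h2', h3', h4'⟩ := hij
      have hcx : (r j).1.1 + e < (r j).2.1 - e := by linarith
      have hcy : (r j).1.2 + e < (r j).2.2 - e := by linarith
      have hjn : (j.val : ℝ) + 1 ≤ (n : ℝ) := by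
        have := j.isLt
        exact_mod_cast Nat.succ_le_of_lt this
      have hj0 : (0 : ℝ) ≤ (j.val : ℝ) := Nat.cast_nonneg _
      refine ⟨![(p i).1, (p i).2, (j.val : ℝ) + 1/2], ?_, ?_⟩
      · rw [memP]
        refine ⟨⟨by simp <;> linarith, by simp <;> linarith⟩,
          ⟨by simp <;> linarith, by simp <;> linarith⟩, by simp <;> linarith, by simp <;> linarith⟩
      · rw [memR]
        simp only [if_pos hcx, if_pos hcy]
        refine ⟨⟨by simp <;> linarith, by simp <;> linarith⟩,
          ⟨by simp <;> linarith, by simp <;> linarith⟩, by simp <;> linarith, by simp <;> linarith⟩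
  have K2 : ∀ i i', i ≠ i' →
      boxSet (lo (Sum.inl i)) (hi (Sum.inl i)) ∩ boxSet (lo (Sum.inl i')) (hi (Sum.inl i')) = ∅ := by
    intro i i' hne
    rw [Set.eq_empty_iff_forall_notMem]
    rintro x ⟨hx, hx'⟩
    rw [memP] at hx hx'
    have hpp : p i ≠ p i' := fun h => hne (hp h)
    by_cases h1 : (p i).1 = (p i').1
    · have h2 : (p i).2 ≠ (p i').2 := fun h2 => hpp (Prod.ext h1 h2)
      have hcb := hBy i i' h2
      have : |(p i).2 - (p i').2| < c := by
        rw [abs_lt]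
        constructor <;> linarith [hx.2.1.1, hx.2.1.2, hx'.2.1.1, hx'.2.1.2]
      linarith
    · have hcb := hBx i i' h1
      have : |(p i).1 - (p i').1| < c := by
        rw [abs_lt]
        constructor <;> linarith [hx.1.1, hx.1.2, hx'.1.1, hx'.1.2]
      linarith
  have K3 : ∀ j j', j ≠ j' →
      boxSet (lo (Sum.inr j)) (hi (Sum.inr j)) ∩ boxSet (lo (Sum.inr j')) (hi (Sum.inr j')) = ∅ := by
    intro j j' hne
    rw [Set.eq_empty_iff_forall_notMem]
    rintro x ⟨hx, hx'⟩
    rw [memR] at hx hx'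
    obtain ⟨-, -, hz1, hz2⟩ := hx
    obtain ⟨-, -, hz1', hz2'⟩ := hx'
    apply hne
    apply Fin.ext
    have a1 : (j.val : ℝ) < (j'.val : ℝ) + 1 := by linarith
    have a2 : (j'.val : ℝ) < (j.val : ℝ) + 1 := by linarith
    have b1 : j.val < j'.val + 1 := by exact_mod_cast a1
    have b2 : j'.val < j.val + 1 := by exact_mod_cast a2
    omega
  have nonemptyB : ∀ v, (boxSet (lo v) (hi v)).Nonempty := by
    intro v
    refine ⟨fun k => (lo v k + hi v k) / 2, fun k => ?_⟩
    have := hlohi v k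
    constructor <;> simp <;> linarith
  have hinj : Function.Injective (fun v => boxSet (lo v) (hi v)) := by
    intro v w hvw
    simp only at hvw
    by_contra hne
    have key : ∀ (i : Fin m) (j : Fin n),
        boxSet (lo (Sum.inl i)) (hi (Sum.inl i)) ≠ boxSet (lo (Sum.inr j)) (hi (Sum.inr j)) := by
      intro i j heq
      have hmem : (![(p i).1, (p i).2, -(1:ℝ)/2]) ∈ boxSet (lo (Sum.inl i)) (hi (Sum.inl i)) := by
        rw [memP]
        have : (0:ℝ) ≤ (n:ℝ) := Nat.cast_nonneg _
        refine ⟨⟨by simp <;> linarith, by simp <;> linarith⟩,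
          ⟨by simp <;> linarith, by simp <;> linarith⟩, by simp <;> linarith, by simp <;> linarith⟩
      rw [heq, memR] at hmem
      have hz := hmem.2.2.1
      have hj0 : (0 : ℝ) ≤ (j.val : ℝ) := Nat.cast_nonneg _
      simp at hz
      linarith
    cases v with
    | inl i =>
      cases w with
      | inl i' =>
        have hii : i ≠ i' := fun h => hne (by rw [h])
        obtain ⟨x, hx⟩ := nonemptyB (Sum.inl i)
        have hx' : x ∈ boxSet (lo (Sum.inl i')) (hi (Sum.inl i')) := hvw ▸ hx
        have := K2 i i' hii
        exact Set.notMem_empty x (this ▸ Set.mem_inter hx hx')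
      | inr j => exact key i j hvw
    | inr j =>
      cases w with
      | inl i => exact key i j hvw.symm
      | inr j' =>
        have hjj : j ≠ j' := fun h => hne (by rw [h])
        obtain ⟨x, hx⟩ := nonemptyB (Sum.inr j)
        have hx' : x ∈ boxSet (lo (Sum.inr j')) (hi (Sum.inr j')) := hvw ▸ hx
        have := K3 j j' hjj
        exact Set.notMem_empty x (this ▸ Set.mem_inter hx hx')
  refine ⟨fun v => boxSet (lo v) (hi v), fun v => ⟨lo v, hi v, hlohi v, rfl⟩, hinj, ?_⟩
  intro v w
  cases v with
  | inl i =>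
    cases w with
    | inl i' =>
      constructor
      · intro h
        exact absurd h (by simp [bipGraph, SimpleGraph.fromRel_adj])
      · rintro ⟨hne, x, hx⟩
        have hii : i ≠ i' := fun h => hne (by rw [h])
        exact absurd (K2 i i' hii ▸ hx) (Set.notMem_empty x)
    | inr j =>
      have hadj : (bipGraph (fun i j => InRect (p i) (r j))).Adj (Sum.inl i) (Sum.inr j)
          ↔ InRect (p i) (r j) := by
        simp [bipGraph, SimpleGraph.fromRel_adj]
      rw [hadj, ← K1 i j]
      constructor
      · intro h
        exact ⟨by simp, h⟩
      · exact fun h => h.2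
  | inr j =>
    cases w with
    | inl i =>
      have hadj : (bipGraph (fun i j => InRect (p i) (r j))).Adj (Sum.inr j) (Sum.inl i)
          ↔ InRect (p i) (r j) := by
        simp [bipGraph, SimpleGraph.fromRel_adj]
      rw [hadj, ← K1 i j]
      rw [Set.inter_comm]
      constructor
      · intro h
        exact ⟨by simp, h⟩
      · exact fun h => h.2
    | inr j' =>
      constructor
      · intro h
        exact absurd h (by simp [bipGraph, SimpleGraph.fromRel_adj])
      · rintro ⟨hne, x, hx⟩
        have hjj : j ≠ j' := fun h => hne (by rw [h])
        exact absurd (K3 j j' hjj ▸ hx) (Set.notMem_empty x)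
end
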